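/- arXiv:math/0109043 — 10 statements merged into one kernel-verified Lean document; each statement's English description precedes it below -/
import Mathlib

section
/- Let m, n ≥ 2 be integers. The dimension over 𝔽₂ = ZMod 2 of the space of harmonic functions on the m×n rectangular grid equals gcd(m+1, n+1) − 1. -/
/-!
Over `𝔽₂`, for every `F : ℤ → 𝔽₂` the function `(a, b) ↦ F (a + b) + F (b - a)` satisfies the
four-neighbour equation on all of `ℤ²`. In the coordinates `(a, b) = (i + 1, j + 1)` it vanishes
on the four lines `a = 0`, `a = m + 1`, `b = 0`, `b = n + 1` bounding the grid as soon as `F` is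
even with periods `2 (m + 1)` and `2 (n + 1)`, that is, even with period `2 K` for
`K = gcd (m + 1) (n + 1)`; such `F` are the functions on `{0, …, K}` extended by reflection, and
their restrictions to the grid are harmonic. Conversely, a harmonic `v` extends by reflection
across the four lines to a solution on all of `ℤ²`. A solution is determined by two consecutive
rows and some even `F` matches the rows `a = 0, 1`, so the extension has the above form, and its
vanishing on the lines forces the periods of `F`. The `F` sent to `0` are those depending only on
the parity of the argument, so the dimension is `(K + 1) - 2`.
-/

/-- Membership in the m×n rectangular grid {0,…,m−1}×{0,…,n−1}. -/
def InGrid (m n i j : ℤ) : Prop :=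
  0 ≤ i ∧ i ≤ m - 1 ∧ 0 ≤ j ∧ j ≤ n - 1


instance (m n i j : ℤ) : Decidable (InGrid m n i j) :=
  inferInstanceAs (Decidable (_ ∧ _ ∧ _ ∧ _))

/-- A function on ℤ×ℤ with values in ZMod 2, vanishing outside the m×n grid,
is harmonic if the sum of its values at the four neighbours of any grid point is 0. -/
def IsHarmonic (m n : ℤ) (v : ℤ → ℤ → ZMod 2) : Prop :=
  (∀ i j : ℤ, ¬ InGrid m n i j → v i j = 0) ∧
  (∀ i j : ℤ, InGrid m n i j →
    v (i - 1) j + v (i + 1) j + v i (j - 1) + v i (j + 1) = 0)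

/-- The 𝔽₂-vector space of harmonic functions on the m×n grid. -/
def harm (m n : ℤ) : Submodule (ZMod 2) (ℤ → ℤ → ZMod 2) where
  carrier := {v | IsHarmonic m n v}
  zero_mem' := ⟨fun _ _ _ => rfl, fun _ _ _ => by simp⟩
  add_mem' := by
    rintro a b ⟨ha0, ha1⟩ ⟨hb0, hb1⟩
    refine ⟨fun i j h => ?_, fun i j h => ?_⟩
    · simp [Pi.add_apply, ha0 i j h, hb0 i j h]
    · have h1 := ha1 i j h
      have h2 := hb1 i j h
      simp only [Pi.add_apply]
      linear_combination h1 + h2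
  smul_mem' := by
    rintro c a ⟨ha0, ha1⟩
    refine ⟨fun i j h => ?_, fun i j h => ?_⟩
    · simp [Pi.smul_apply, ha0 i j h]
    · have h1 := ha1 i j h
      simp only [Pi.smul_apply, smul_eq_mul]
      linear_combination c * h1

/-- Functions vanishing on a prescribed set of points. -/
def vanishOn (P : ℤ → ℤ → Prop) : Submodule (ZMod 2) (ℤ → ℤ → ZMod 2) where
  carrier := {v | ∀ i j : ℤ, P i j → v i j = 0}
  zero_mem' := fun _ _ _ => rfl
  add_mem' := by
    intro a b ha hb i j h
    simp [Pi.add_apply, ha i j h, hb i j h]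
  smul_mem' := by
    intro c a ha i j h
    simp [Pi.smul_apply, ha i j h]

/-- The polarized kernel ker BW: harmonic functions vanishing at white points
(points with i+j odd). -/
def kerBW (m n : ℤ) : Submodule (ZMod 2) (ℤ → ℤ → ZMod 2) :=
  harm m n ⊓ vanishOn (fun i j => Odd (i + j))

/-- The polarized kernel ker WB: harmonic functions vanishing at black points
(points with i+j even). -/
def kerWB (m n : ℤ) : Submodule (ZMod 2) (ℤ → ℤ → ZMod 2) :=
  harm m n ⊓ vanishOn (fun i j => Even (i + j))

open Function

lemma Function.Periodic.trans_dvd {α : Type*} {f : ℤ → α} {p q : ℤ} (hf : Periodic f p)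
    (hpq : p ∣ q) : Periodic f q := by
  obtain ⟨e, rfl⟩ := hpq
  simpa [mul_comm] using hf.int_mul e

lemma Function.Periodic.gcd {α : Type*} {f : ℤ → α} {p q : ℤ} (hp : Periodic f p)
    (hq : Periodic f q) : Periodic f (Int.gcd p q) := by
  rw [Int.gcd_eq_gcd_ab, mul_comm p, mul_comm q]
  exact (hp.int_mul _).add_period (hq.int_mul _)

namespace GridHarmonic

-- for `0 < c`, the distance from `s` to the nearest multiple of `2 * c`
def fold (c s : ℤ) : ℤ := min (s % (2 * c)) (2 * c - s % (2 * c))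

section Fold

variable {c : ℤ}

lemma fold_congr {s t : ℤ} (h : s ≡ t [ZMOD 2 * c]) : fold c s = fold c t := by
  rw [fold, fold, h.eq]

lemma fold_periodic : Periodic (fold c) (2 * c) := fun _ =>
  fold_congr Int.add_modEq_right

lemma fold_emod (s : ℤ) : fold c (s % (2 * c)) = fold c s :=
  fold_congr (Int.mod_modEq s _)

lemma fold_eq_min {s : ℤ} (h0 : 0 ≤ s) (h1 : s ≤ 2 * c) : fold c s = min s (2 * c - s) := by
  rcases h1.lt_or_eq with h1 | rfl
  · rw [fold, Int.emod_eq_of_lt h0 h1]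
  · simp [fold, min_comm]

lemma fold_emod_two (s : ℤ) : fold c s % 2 = s % 2 := by
  have h := Int.emod_emod_of_dvd s (dvd_mul_right 2 c)
  simp only [fold]
  omega

lemma fold_mem_Icc (hc : 0 < c) (s : ℤ) : fold c s ∈ Set.Icc 0 c := by
  have h0 := Int.emod_nonneg s (show 2 * c ≠ 0 by omega)
  have h1 := Int.emod_lt_of_pos s (show 0 < 2 * c by omega)
  simp only [fold, Set.mem_Icc]
  omega

lemma fold_of_mem_Icc {s : ℤ} (h0 : 0 ≤ s) (h1 : s ≤ c) : fold c s = s := by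
  rw [fold_eq_min h0 (by omega)]; omega

lemma fold_neg (hc : 0 < c) (s : ℤ) : fold c (-s) = fold c s := by
  have h0 := Int.emod_nonneg s (show 2 * c ≠ 0 by omega)
  have h1 := Int.emod_lt_of_pos s (show 0 < 2 * c by omega)
  have hneg : -s ≡ 2 * c - s % (2 * c) [ZMOD 2 * c] :=
    Int.modEq_iff_dvd.mpr ⟨1 + s / (2 * c), by rw [Int.emod_def]; ring⟩
  rw [fold_congr hneg, ← fold_emod s, fold_eq_min (by omega) (by omega), fold_eq_min h0 h1.le]
  omega

lemma fold_neighbors (hc : 0 < c) (s : ℤ) :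
    ((fold c s = 0 ∨ fold c s = c) ∧ fold c (s - 1) = fold c (s + 1)) ∨
    (fold c (s - 1) = fold c s - 1 ∧ fold c (s + 1) = fold c s + 1) ∨
    (fold c (s - 1) = fold c s + 1 ∧ fold c (s + 1) = fold c s - 1) := by
  have h0 := Int.emod_nonneg s (show 2 * c ≠ 0 by omega)
  have h1 := Int.emod_lt_of_pos s (show 0 < 2 * c by omega)
  set r := s % (2 * c) with hr
  have hs : fold c s = min r (2 * c - r) := by rw [← fold_emod, fold_eq_min h0 h1.le]
  have hp : fold c (s + 1) = min (r + 1) (2 * c - (r + 1)) := by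
    rw [fold_congr ((Int.mod_modEq s _).symm.add_right 1), fold_eq_min (by omega) (by omega)]
  have hm : fold c (s - 1) = if r = 0 then 1 else min (r - 1) (2 * c - (r - 1)) := by
    rw [fold_congr ((Int.mod_modEq s _).symm.sub_right 1)]
    split_ifs with h
    · rw [← hr, h, zero_sub, fold_neg hc, fold_of_mem_Icc zero_le_one (by omega)]
    · rw [fold_eq_min (by omega) (by omega)]
  rw [hs, hp, hm]
  split_ifs <;> omega

lemma apply_fold {α : Type*} (hc : 0 < c) {F : ℤ → α} (hE : Function.Even F)
    (hP : Periodic F (2 * c)) (s : ℤ) : F (fold c s) = F s := by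
  have h0 := Int.emod_nonneg s (show 2 * c ≠ 0 by omega)
  have h1 := Int.emod_lt_of_pos s (show 0 < 2 * c by omega)
  have hr : F (s % (2 * c)) = F s := by
    rw [Int.emod_def, mul_comm]
    exact hP.sub_int_mul_eq _
  rw [← fold_emod, fold_eq_min h0 h1.le, ← hr]
  rcases min_choice (s % (2 * c)) (2 * c - s % (2 * c)) with h | h <;> rw [h]
  rw [hP.sub_eq', hE]

end Fold

section Recurrences

variable {M : Type*} [AddCommGroup M]

def neighborSum (W : ℤ → ℤ → M) (a b : ℤ) : M :=
  W (a - 1) b + W (a + 1) b + W a (b - 1) + W a (b + 1)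

lemma eq_zero_of_neighborSum_eq_zero {W : ℤ → ℤ → M} (hW : ∀ a b, neighborSum W a b = 0)
    (h0 : ∀ b, W 0 b = 0) (h1 : ∀ b, W 1 b = 0) : W = 0 := by
  have rows : ∀ a : ℤ, (∀ b, W a b = 0) ∧ (∀ b, W (a + 1) b = 0) := by
    intro a
    induction a using Int.induction_on with
    | zero => exact ⟨h0, by simpa using h1⟩
    | succ k ih =>
      refine ⟨ih.2, fun b => ?_⟩
      have h := hW (k + 1) b
      simp only [neighborSum, add_sub_cancel_right, ih.1, ih.2, zero_add, add_zero] at h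
      exact h
    | pred k ih =>
      refine ⟨fun b => ?_, by simpa using ih.1⟩
      have h := hW (-k) b
      simp only [neighborSum, ih.1, ih.2, add_zero] at h
      simpa using h
  funext a b
  exact (rows a).1 b

def evenSolution (w : ℤ → M) : ℕ → M
  | 0 => 0
  | 1 => 0
  | k + 2 => w (k + 1) - evenSolution w k

lemma exists_even_solution {w : ℤ → M} (hE : Function.Even w) (h0 : w 0 = 0) :
    ∃ F : ℤ → M, Function.Even F ∧ ∀ b, F (b + 1) + F (b - 1) = w b := by
  set F : ℤ → M := fun s => evenSolution w s.natAbs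
  have hF : Function.Even F := fun s => by simp [F]
  have hnat : ∀ k : ℕ, F (k + 1) + F (k - 1) = w k := by
    rintro (_ | k)
    · simp [F, evenSolution, h0]
    · rw [show ((k + 1 : ℕ) : ℤ) + 1 = ((k + 2 : ℕ) : ℤ) by push_cast; ring,
        show ((k + 1 : ℕ) : ℤ) - 1 = k by push_cast; ring]
      simp only [F, Int.natAbs_natCast]
      rw [evenSolution, sub_add_cancel, Nat.cast_succ]
  refine ⟨F, hF, fun b => ?_⟩
  obtain ⟨k, rfl | rfl⟩ := Int.eq_nat_or_neg b
  · exact hnat k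
  · rw [hE, ← hnat k, ← hF, ← hF (-k - 1), add_comm]
    congr 2 <;> ring

end Recurrences

section Diagonal

def diag (F : ℤ → ZMod 2) (a b : ℤ) : ZMod 2 := F (a + b) + F (b - a)

variable {F : ℤ → ZMod 2}

lemma neighborSum_diag (F : ℤ → ZMod 2) (a b : ℤ) : neighborSum (diag F) a b = 0 := by
  simp only [neighborSum, diag]
  ring_nf
  simp [CharTwo.two_eq_zero]

lemma diag_zero_left (b : ℤ) : diag F 0 b = 0 := by
  simp [diag, CharTwo.add_self_eq_zero]

lemma diag_comm (hE : Function.Even F) (a b : ℤ) : diag F a b = diag F b a := by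
  rw [diag, diag, add_comm b a, ← hE (b - a), neg_sub]

lemma forall_diag_eq_zero_iff (c : ℤ) : (∀ b, diag F c b = 0) ↔ Periodic F (2 * c) := by
  simp only [diag, CharTwo.add_eq_zero]
  refine ⟨fun h s => ?_, fun h b => ?_⟩
  · simpa [show c + (s + c) = s + 2 * c by ring] using h (s + c)
  · rw [show c + b = b - c + 2 * c by ring, h]

lemma diag_comp_intCast_eq_zero (g : ZMod 2 → ZMod 2) (a b : ℤ) :
    diag (fun s => g s) a b = 0 := by
  rw [diag, CharTwo.add_eq_zero]
  congr 1
  rw [ZMod.intCast_eq_intCast_iff']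
  omega

end Diagonal

section Grid

variable {m n : ℤ}

lemma mem_harm {v : ℤ → ℤ → ZMod 2} :
    v ∈ harm m n ↔ (∀ i j, ¬ InGrid m n i j → v i j = 0) ∧
      ∀ i j, InGrid m n i j → neighborSum v i j = 0 := Iff.rfl

def gridMap (m n : ℤ) : (ℤ → ZMod 2) →ₗ[ZMod 2] ℤ → ℤ → ZMod 2 where
  toFun F i j := if InGrid m n i j then diag F (i + 1) (j + 1) else 0
  map_add' F G := by
    ext i j
    simp only [Pi.add_apply, diag]
    split_ifs <;> ring
  map_smul' c F := by
    ext i j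
    simp only [Pi.smul_apply, smul_eq_mul, RingHom.id_apply, diag]
    split_ifs <;> ring

lemma gridMap_apply (F : ℤ → ZMod 2) (i j : ℤ) :
    gridMap m n F i j = if InGrid m n i j then diag F (i + 1) (j + 1) else 0 := rfl

lemma gridMap_mem_harm {F : ℤ → ZMod 2} (hE : Function.Even F)
    (hPm : Periodic F (2 * (m + 1))) (hPn : Periodic F (2 * (n + 1))) :
    gridMap m n F ∈ harm m n := by
  have hframe : ∀ a b, (a = 0 ∨ a = m + 1 ∨ b = 0 ∨ b = n + 1) → diag F a b = 0 := by
    rintro a b (rfl | rfl | rfl | rfl)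
    · exact diag_zero_left b
    · exact (forall_diag_eq_zero_iff _).2 hPm b
    · rw [diag_comm hE, diag_zero_left]
    · rw [diag_comm hE]; exact (forall_diag_eq_zero_iff _).2 hPn a
  have hclosed : ∀ i j, -1 ≤ i → i ≤ m → -1 ≤ j → j ≤ n →
      gridMap m n F i j = diag F (i + 1) (j + 1) := by
    intro i j hi0 hi1 hj0 hj1
    rw [gridMap_apply]
    split_ifs with h
    · rfl
    · exact (hframe _ _ (by simp only [InGrid] at h; omega)).symm
  refine mem_harm.2 ⟨fun i j h => by rw [gridMap_apply, if_neg h], fun i j h => ?_⟩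
  obtain ⟨hi0, hi1, hj0, hj1⟩ := h
  have h := neighborSum_diag F (i + 1) (j + 1)
  simp only [neighborSum, add_sub_cancel_right] at h ⊢
  simp (disch := omega) only [hclosed, sub_add_cancel]
  exact h

def reflectExt (m n : ℤ) (v : ℤ → ℤ → ZMod 2) (a b : ℤ) : ZMod 2 :=
  v (fold (m + 1) a - 1) (fold (n + 1) b - 1)

variable {v : ℤ → ℤ → ZMod 2}

lemma neighborSum_reflectExt (hm : 0 ≤ m) (hn : 0 ≤ n) (hv : v ∈ harm m n) (a b : ℤ) :
    neighborSum (reflectExt m n v) a b = 0 := by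
  obtain ⟨hv0, hv1⟩ := mem_harm.1 hv
  have hM : 0 < m + 1 := by omega
  have hN : 0 < n + 1 := by omega
  have hx₁ := fold_mem_Icc hM (a - 1)
  have hx₂ := fold_mem_Icc hM (a + 1)
  have hy₁ := fold_mem_Icc hN (b - 1)
  have hy₂ := fold_mem_Icc hN (b + 1)
  simp only [Set.mem_Icc] at hx₁ hx₂ hy₁ hy₂
  simp only [neighborSum, reflectExt]
  -- On a reflection line the two neighbours across it fold to the same point and cancel;
  -- elsewhere the four terms are the neighbour sum of `v` at an interior point.
  rcases fold_neighbors hM a with ⟨hxb, hxe⟩ | ⟨hxm, hxp⟩ | ⟨hxm, hxp⟩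
  · have hrow : ∀ j, v (fold (m + 1) a - 1) j = 0 := fun j =>
      hv0 _ _ (by simp only [InGrid]; omega)
    simp [hxe, hrow, CharTwo.add_self_eq_zero]
  all_goals rcases fold_neighbors hN b with ⟨hyb, hye⟩ | ⟨hym, hyp⟩ | ⟨hym, hyp⟩
  all_goals first
    | have hcol : ∀ i, v i (fold (n + 1) b - 1) = 0 := fun i =>
        hv0 _ _ (by simp only [InGrid]; omega)
      simp [hye, hcol, CharTwo.add_self_eq_zero]
    | have h := hv1 (fold (m + 1) a - 1) (fold (n + 1) b - 1)
        ⟨by omega, by omega, by omega, by omega⟩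
      simp only [neighborSum, sub_add_cancel] at h
      rw [hxm, hxp, hym, hyp, add_sub_cancel_right, add_sub_cancel_right]
      linear_combination h

lemma reflectExt_of_inGrid {i j : ℤ} (h : InGrid m n i j) :
    reflectExt m n v (i + 1) (j + 1) = v i j := by
  obtain ⟨hi0, hi1, hj0, hj1⟩ := h
  rw [reflectExt, fold_of_mem_Icc (by omega) (by omega), fold_of_mem_Icc (by omega) (by omega)]
  simp

lemma reflectExt_frame (hm : 0 ≤ m) (hn : 0 ≤ n) (hv : v ∈ harm m n) {a b : ℤ}
    (h : a = 0 ∨ a = m + 1 ∨ b = 0 ∨ b = n + 1) : reflectExt m n v a b = 0 := by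
  refine (mem_harm.1 hv).1 _ _ fun hg => ?_
  simp only [InGrid] at hg
  rcases h with rfl | rfl | rfl | rfl
  · rw [fold_of_mem_Icc (c := m + 1) le_rfl (by omega)] at hg; omega
  · rw [fold_of_mem_Icc (c := m + 1) (by omega) le_rfl] at hg; omega
  · rw [fold_of_mem_Icc (c := n + 1) le_rfl (by omega)] at hg; omega
  · rw [fold_of_mem_Icc (c := n + 1) (by omega) le_rfl] at hg; omega

lemma exists_gridMap_eq_of_mem_harm (hm : 0 ≤ m) (hn : 0 ≤ n) (hv : v ∈ harm m n) :
    ∃ F : ℤ → ZMod 2, Function.Even F ∧ Periodic F (2 * (m + 1)) ∧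
      Periodic F (2 * (n + 1)) ∧ gridMap m n F = v := by
  set U := reflectExt m n v
  have hU0 : ∀ {a b}, (a = 0 ∨ a = m + 1 ∨ b = 0 ∨ b = n + 1) → U a b = 0 :=
    reflectExt_frame hm hn hv
  obtain ⟨F, hE, hrec⟩ := exists_even_solution (w := U 1)
    (fun b => by simp only [U, reflectExt, fold_neg (show 0 < n + 1 by omega)]) (hU0 (by simp))
  have hF : diag F = U := by
    refine sub_eq_zero.1 <|
      eq_zero_of_neighborSum_eq_zero (fun a b => ?_) (fun b => ?_) (fun b => ?_)
    · have h₁ := neighborSum_diag F a b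
      have h₂ := neighborSum_reflectExt hm hn hv a b
      simp only [neighborSum, Pi.sub_apply] at h₁ h₂ ⊢
      linear_combination h₁ - h₂
    · simp [diag_zero_left, hU0]
    · rw [Pi.sub_apply, Pi.sub_apply, diag, add_comm 1 b, hrec, sub_self]
  refine ⟨F, hE, (forall_diag_eq_zero_iff _).1 fun b => ?_,
    (forall_diag_eq_zero_iff _).1 fun a => ?_, ?_⟩
  · rw [hF]; exact hU0 (by simp)
  · rw [diag_comm hE, hF]; exact hU0 (by simp)
  · ext i j
    rw [gridMap_apply]
    split_ifs with h
    · rw [hF]; exact reflectExt_of_inGrid h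
    · exact ((mem_harm.1 hv).1 i j h).symm

end Grid

section Unfold

open scoped Fin.NatCast

variable {K : ℕ}

def foldIdx (K : ℕ) (s : ℤ) : Fin (K + 1) := (fold K s).toNat

def unfold (K : ℕ) : (Fin (K + 1) → ZMod 2) →ₗ[ZMod 2] ℤ → ZMod 2 :=
  LinearMap.funLeft _ _ (foldIdx K)

def parityLift (K : ℕ) : (ZMod 2 → ZMod 2) →ₗ[ZMod 2] Fin (K + 1) → ZMod 2 :=
  LinearMap.funLeft _ _ fun t => ((t : ℕ) : ZMod 2)

lemma foldIdx_val (hK : 0 < K) (s : ℤ) : ((foldIdx K s : ℕ) : ℤ) = fold K s := by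
  obtain ⟨h0, h1⟩ := fold_mem_Icc (c := K) (by omega) s
  rw [foldIdx, Fin.val_natCast, Nat.mod_eq_of_lt (by omega)]
  omega

lemma unfold_apply_of_le {t : ℕ} (ht : t ≤ K) (g : Fin (K + 1) → ZMod 2) :
    unfold K g t = g t := by
  rw [unfold, LinearMap.funLeft_apply, foldIdx, fold_of_mem_Icc (by omega) (by omega)]
  rfl

lemma even_unfold (hK : 0 < K) (g : Fin (K + 1) → ZMod 2) : Function.Even (unfold K g) :=
  fun s => by simp only [unfold, LinearMap.funLeft_apply, foldIdx, fold_neg (c := K) (by omega)]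

lemma unfold_periodic (g : Fin (K + 1) → ZMod 2) : Periodic (unfold K g) (2 * K) :=
  fun s => by simp only [unfold, LinearMap.funLeft_apply, foldIdx, fold_periodic s]

lemma unfold_restrict (hK : 0 < K) {F : ℤ → ZMod 2} (hE : Function.Even F)
    (hP : Periodic F (2 * K)) : unfold K (fun t => F (t : ℕ)) = F := by
  ext s
  rw [unfold, LinearMap.funLeft_apply, foldIdx_val hK, apply_fold (by omega) hE hP]

lemma unfold_parityLift (hK : 0 < K) (c : ZMod 2 → ZMod 2) :
    unfold K (parityLift K c) = fun s : ℤ => c s := by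
  ext s
  simp only [unfold, parityLift, LinearMap.funLeft_apply]
  rw [← Int.cast_natCast, foldIdx_val hK,
    (ZMod.intCast_eq_intCast_iff' _ _ 2).2 (fold_emod_two s)]

lemma parityLift_injective (hK : 0 < K) : Injective (parityLift K) := by
  refine LinearMap.funLeft_injective_of_surjective _ _ _ fun e => ⟨e.val, ?_⟩
  rw [Fin.val_natCast, Nat.mod_eq_of_lt (by have := e.val_lt; omega), ZMod.natCast_zmod_val]

end Unfold

lemma apply_eq_apply_mod_two {α : Type*} {F : ℤ → α} {N : ℤ}
    (h : ∀ b, 1 ≤ b → b < N → F (b + 1) = F (b - 1)) (t : ℕ) (ht : t ≤ N) :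
    F t = F (t % 2 : ℕ) := by
  induction t using Nat.twoStepInduction with
  | zero => rfl
  | one => rfl
  | more t ih _ =>
    have hstep := h (t + 1) (by omega) (by omega)
    rw [Nat.add_mod_right, ← ih (by omega), ← add_sub_cancel_right (t : ℤ) 1, ← hstep]
    push_cast
    ring_nf

open scoped Fin.NatCast in
lemma ker_gridMap_comp_unfold {m n : ℤ} {K : ℕ} (hm : 1 ≤ m) (hK : 0 < K)
    (hKn : (K : ℤ) ≤ n + 1) :
    LinearMap.ker (gridMap m n ∘ₗ unfold K) = LinearMap.range (parityLift K) := by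
  apply le_antisymm
  · intro g hg
    have hstep : ∀ b, 1 ≤ b → b < n + 1 → unfold K g (b + 1) = unfold K g (b - 1) := by
      intro b hb0 hb1
      have h := congrFun₂ (LinearMap.mem_ker.1 hg) 0 (b - 1)
      rw [LinearMap.comp_apply, gridMap_apply, if_pos ⟨le_rfl, by omega, by omega, by omega⟩,
        diag, Pi.zero_apply, Pi.zero_apply, CharTwo.add_eq_zero] at h
      convert h using 2 <;> ring
    refine ⟨fun e => g (e.val : ℕ), funext fun t => ?_⟩
    have ht := t.isLt
    have h2 : (t : ℕ) % 2 ≤ K := by omega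
    rw [parityLift, LinearMap.funLeft_apply, ZMod.val_natCast, ← unfold_apply_of_le h2 g,
      ← apply_eq_apply_mod_two hstep _ (by omega), unfold_apply_of_le (by omega),
      Fin.cast_val_eq_self]
  · rintro _ ⟨c, rfl⟩
    ext i j
    rw [LinearMap.comp_apply, unfold_parityLift hK, gridMap_apply]
    split_ifs
    · exact diag_comp_intCast_eq_zero c _ _
    · rfl

lemma range_gridMap_comp_unfold {m n : ℤ} (hm : 0 ≤ m) (hn : 0 ≤ n) :
    LinearMap.range (gridMap m n ∘ₗ unfold (Int.gcd (m + 1) (n + 1))) = harm m n := by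
  set K := Int.gcd (m + 1) (n + 1)
  have hK : 0 < K := Int.gcd_pos_of_ne_zero_left _ (by omega)
  apply le_antisymm
  · rintro _ ⟨g, rfl⟩
    have hP := unfold_periodic g
    exact gridMap_mem_harm (even_unfold hK g)
      (hP.trans_dvd (mul_dvd_mul_left 2 (Int.gcd_dvd_left _ _)))
      (hP.trans_dvd (mul_dvd_mul_left 2 (Int.gcd_dvd_right _ _)))
  · intro v hv
    obtain ⟨F, hE, hPm, hPn, rfl⟩ := exists_gridMap_eq_of_mem_harm hm hn hv
    have hP : Periodic F (2 * K) := by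
      simpa [K, Int.gcd_mul_left] using hPm.gcd hPn
    exact ⟨_, by rw [LinearMap.comp_apply, unfold_restrict hK hE hP]⟩

end GridHarmonic

open GridHarmonic in
/-- the 𝔽₂-dimension of the space of harmonic functions on the
m×n rectangular grid equals gcd(m+1, n+1) − 1. -/
theorem harmonic_dimension (m n : ℤ) (hm : 2 ≤ m) (hn : 2 ≤ n) :
    Module.finrank (ZMod 2) (harm m n) = Int.gcd (m + 1) (n + 1) - 1 := by
  set K := Int.gcd (m + 1) (n + 1)
  have hK : 0 < K := Int.gcd_pos_of_ne_zero_left _ (by omega)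
  have hKn : (K : ℤ) ≤ n + 1 := Int.le_of_dvd (by omega) (Int.gcd_dvd_right _ _)
  have h := (gridMap m n ∘ₗ unfold K).finrank_range_add_finrank_ker
  rw [range_gridMap_comp_unfold (by omega) (by omega), ker_gridMap_comp_unfold (by omega) hK hKn,
    LinearMap.finrank_range_of_inj (parityLift_injective hK), Module.finrank_fintype_fun_eq_card,
    ZMod.card, Module.finrank_fin_fun] at h
  omega
end

section
/- Let m, n ≥ 2 be integers, c = gcd(m+1, n+1) − 1, β = (c + (c mod 2))/2 and ω = (c − (c mod 2))/2. Then the number of nonzero polarized harmonic functions on the m×n rectangular grid, i.e. the cardinality of (ker BW ∖ {0}) ∪ (ker WB ∖ {0}), equals 2^β + 2^ω − 2. -/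
/-!
Shift the grid to `[1, m] × [1, n]` and extend a harmonic function `v` to all of `ℤ²` by
reflecting in the frame lines `a ∈ {0, m + 1}` and `b ∈ {0, n + 1}`. Over `ZMod 2` the harmonic
condition is the discrete wave equation `w(a-1,b) + w(a+1,b) = w(a,b-1) + w(a,b+1)`, and the
extension solves it everywhere. By d'Alembert, `w(a,b) = Q(a+b) + Q(a-b)`, where the profile `Q`
is read off the diagonals `a = b` and `a = b + 1`. The frame conditions say exactly that `Q` is
even with periods `2(m+1)` and `2(n+1)`, i.e. even and `2g`-periodic for `g = gcd(m+1, n+1)`.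
Such a `Q` is determined by its values on `[0, g]`, of which `Q 0 = w(0,0)` and `Q 1 = w(1,0)`
vanish and the others are free. Polarization makes `Q` vanish on one parity class, leaving `β`
(resp. `ω`) free values.
-/

/-- Folds `ℤ` onto `[0, N]`. -/
def zigzag (N x : ℤ) : ℤ := min (x % (2 * N)) (-x % (2 * N))

section zigzag

variable {N : ℤ}

theorem zigzag_neg (x : ℤ) : zigzag N (-x) = zigzag N x := by
  simp only [zigzag, neg_neg, min_comm]

theorem zigzag_periodic : (zigzag N).Periodic (2 * N) := by
  intro x
  simp only [zigzag, Int.add_emod_right, neg_add, Int.add_neg_emod_self]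

theorem zigzag_of_mem {x : ℤ} (h₀ : 0 ≤ x) (h₁ : x ≤ N) : zigzag N x = x := by
  rcases h₀.eq_or_lt with rfl | hx
  · simp [zigzag]
  · have : -x % (2 * N) = 2 * N - x := by
      rw [show -x = 2 * N - x + 2 * N * (-1) by ring, Int.add_mul_emod_self_left,
        Int.emod_eq_of_lt (by omega) (by omega)]
    rw [zigzag, Int.emod_eq_of_lt h₀ (by omega), this]
    omega

theorem zigzag_mem_Icc (hN : 0 < N) (x : ℤ) : zigzag N x ∈ Set.Icc 0 N := by
  have h₁ := Int.emod_nonneg x (by omega : 2 * N ≠ 0)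
  have h₂ := Int.emod_lt_of_pos x (by omega : 0 < 2 * N)
  have h₃ : -x % (2 * N) = if 2 * N ∣ x then 0 else 2 * N - x % (2 * N) := by
    rw [Int.neg_emod, Int.natAbs_of_nonneg (by omega)]
  simp only [zigzag, Set.mem_Icc]
  split_ifs at h₃ <;> omega

theorem zigzag_emod_two (x : ℤ) : zigzag N x % 2 = x % 2 := by
  have h := Int.emod_emod_of_dvd x (dvd_mul_right 2 N)
  have h' := Int.emod_emod_of_dvd (-x) (dvd_mul_right 2 N)
  rcases min_choice (x % (2 * N)) (-x % (2 * N)) with h'' | h'' <;>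
    simp only [zigzag, h''] <;> omega

theorem comp_zigzag {β : Type*} {f : ℤ → β} (he : f.Even) (hp : f.Periodic (2 * N)) (x : ℤ) :
    f (zigzag N x) = f x := by
  have hmod : ∀ y, f (y % (2 * N)) = f y := fun y => by
    simpa [Int.emod_def, mul_comm] using hp.sub_int_mul_eq (x := y) (y / (2 * N))
  rcases min_choice (x % (2 * N)) (-x % (2 * N)) with h | h <;> simp only [zigzag, h, hmod]
  exact he x

end zigzag

structure IsReflectionInvariant {β : Type*} (N N' : ℤ) (w : ℤ → ℤ → β) : Prop where
  neg_left : ∀ a b, w (-a) b = w a b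
  periodic_left : ∀ a b, w (a + 2 * N) b = w a b
  neg_right : ∀ a b, w a (-b) = w a b
  periodic_right : ∀ a b, w a (b + 2 * N') = w a b

theorem IsReflectionInvariant.zigzag_zigzag {β : Type*} {N N' : ℤ} {w : ℤ → ℤ → β}
    (hw : IsReflectionInvariant N N' w) (a b : ℤ) : w (zigzag N a) (zigzag N' b) = w a b :=
  (comp_zigzag (f := w (zigzag N a)) (hw.neg_right _) (hw.periodic_right _) b).trans
    (comp_zigzag (f := (w · b)) (hw.neg_left · b) (hw.periodic_left · b) a)

section wave

variable {M : Type*} [AddCommGroup M]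

/-- The discrete wave equation; over `ZMod 2` it is the harmonicity condition. -/
def IsWave (w : ℤ → ℤ → M) : Prop :=
  ∀ a b, w (a - 1) b + w (a + 1) b = w a (b - 1) + w a (b + 1)

def waveOf (Q : ℤ → M) (a b : ℤ) : M := Q (a + b) - Q (a - b)

/-- The values of `w` on the diagonals `a = b` and `a = b + 1`, indexed by `a + b`. -/
def diagProfile (w : ℤ → ℤ → M) (x : ℤ) : M := w (x - x / 2) (x / 2)

def VanishesOnFrame (N N' : ℤ) (w : ℤ → ℤ → M) : Prop :=
  ∀ t, w 0 t = 0 ∧ w N t = 0 ∧ w t 0 = 0 ∧ w t N' = 0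

theorem isWave_waveOf (Q : ℤ → M) : IsWave (waveOf Q) := by
  intro a b
  simp only [waveOf]
  rw [show a - 1 + b = a + (b - 1) by ring, show a - 1 - b = a - (b + 1) by ring,
    show a + 1 + b = a + (b + 1) by ring, show a + 1 - b = a - (b - 1) by ring]
  abel

theorem IsWave.sub {w w' : ℤ → ℤ → M} (hw : IsWave w) (hw' : IsWave w') : IsWave (w - w') := by
  intro a b
  simp only [Pi.sub_apply]
  rw [sub_add_sub_comm, sub_add_sub_comm, hw a b, hw' a b]

theorem diagProfile_waveOf (Q : ℤ → M) (x : ℤ) :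
    diagProfile (waveOf Q) x = Q x - Q (x % 2) := by
  simp only [diagProfile, waveOf]
  rw [show x - x / 2 + x / 2 = x by ring, show x - x / 2 - x / 2 = x % 2 by omega]

theorem waveOf_comm {Q : ℤ → M} (hQ : Q.Even) (a b : ℤ) : waveOf Q a b = waveOf Q b a := by
  simp only [waveOf]
  rw [add_comm, ← hQ (b - a), neg_sub]

theorem waveOf_neg_left {Q : ℤ → M} (hQ : Q.Even) (a b : ℤ) :
    waveOf Q (-a) b = -waveOf Q a b := by
  simp only [waveOf]
  rw [show -a + b = -(a - b) by ring, show -a - b = -(a + b) by ring, hQ, hQ, neg_sub]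

theorem waveOf_neg_right (Q : ℤ → M) (a b : ℤ) : waveOf Q a (-b) = -waveOf Q a b := by
  simp only [waveOf, sub_neg_eq_add, ← sub_eq_add_neg, neg_sub]

theorem forall_waveOf_eq_zero_iff (Q : ℤ → M) (N : ℤ) :
    (∀ a, waveOf Q a N = 0) ↔ Q.Periodic (2 * N) := by
  simp only [waveOf, sub_eq_zero]
  constructor
  · intro h x
    simpa [show x + N - N = x by ring, show x + N + N = x + 2 * N by ring] using h (x + N)
  · intro h a
    simpa [show a - N + 2 * N = a + N by ring] using h (a - N)

theorem vanishesOnFrame_waveOf_iff {Q : ℤ → M} {N N' : ℤ} :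
    VanishesOnFrame N N' (waveOf Q) ↔ Q.Even ∧ Q.Periodic (2 * N) ∧ Q.Periodic (2 * N') := by
  have hcol : (∀ t, waveOf Q 0 t = 0) ↔ Q.Even := by
    simp only [waveOf, zero_add, zero_sub, sub_eq_zero]
    exact ⟨fun h t => (h t).symm, fun h t => (h t).symm⟩
  constructor
  · intro h
    have he := hcol.mp fun t => (h t).1
    refine ⟨he, (forall_waveOf_eq_zero_iff Q N).mp fun t => ?_,
      (forall_waveOf_eq_zero_iff Q N').mp fun t => (h t).2.2.2⟩
    rw [waveOf_comm he]
    exact (h t).2.1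
  · rintro ⟨he, hN, hN'⟩ t
    refine ⟨hcol.mpr he t, ?_, by simp [waveOf], (forall_waveOf_eq_zero_iff Q N').mpr hN' t⟩
    rw [waveOf_comm he]
    exact (forall_waveOf_eq_zero_iff Q N).mpr hN t

/-- The wave equation centred on the diagonal `a - b = d + 1` only involves the diagonals `d`
and `d + 2`: if one of them vanishes, the other is constant, and the row `b = 0` makes it `0`. -/
theorem IsWave.diag_eq_zero_iff {w : ℤ → ℤ → M} (hw : IsWave w) (hrow : ∀ a, w a 0 = 0)
    (d : ℤ) : (∀ k, w (k + d) k = 0) ↔ (∀ k, w (k + (d + 2)) k = 0) := by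
  have step : ∀ k, w (k + d) k - w (k + 1 + d) (k + 1) =
      w (k - 1 + (d + 2)) (k - 1) - w (k + (d + 2)) k := fun k => by
    have := hw (k + d + 1) k
    rw [show k + d + 1 - 1 = k + d by ring, show k + d + 1 + 1 = k + (d + 2) by ring] at this
    rw [show k + 1 + d = k + d + 1 by ring, show k - 1 + (d + 2) = k + d + 1 by ring,
      sub_eq_sub_iff_add_eq_add, this]
  have const : ∀ G : ℤ → M, (∀ k, G (k - 1) = G k) → G 0 = 0 → ∀ k, G k = 0 := by
    intro G hG h0 k
    induction k using Int.induction_on with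
    | zero => exact h0
    | succ k ih => rw [← hG, add_sub_cancel_right, ih]
    | pred k ih => rw [hG, ih]
  constructor
  · intro h
    refine const (fun k => w (k + (d + 2)) k) (fun k => ?_) (by simpa using hrow (d + 2))
    simpa [h, sub_eq_zero] using (step k).symm
  · intro h
    refine const (fun k => w (k + d) k) (fun k => ?_) (by simpa using hrow d)
    simpa [h, sub_eq_zero] using step (k - 1)

theorem IsWave.eq_zero {F : ℤ → ℤ → M} (hF : IsWave F) (hrow : ∀ a, F a 0 = 0)
    (hdiag : ∀ x, diagProfile F x = 0) : F = 0 := by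
  have base : ∀ s, s = 0 ∨ s = 1 → ∀ k, F (k + s) k = 0 := by
    rintro s (rfl | rfl) k
    · have := hdiag (2 * k)
      rwa [diagProfile, show 2 * k / 2 = k by omega, show 2 * k - k = k + 0 by ring] at this
    · have := hdiag (2 * k + 1)
      rwa [diagProfile, show (2 * k + 1) / 2 = k by omega, show 2 * k + 1 - k = k + 1 by ring]
        at this
  have all : ∀ q s, s = 0 ∨ s = 1 → ∀ k, F (k + (s + 2 * q)) k = 0 := by
    intro q s hs
    induction q using Int.induction_on with
    | zero => simpa using base s hs
    | succ q ih => rwa [mul_add_one, ← add_assoc, ← hF.diag_eq_zero_iff hrow]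
    | pred q ih => rwa [hF.diag_eq_zero_iff hrow, add_assoc, ← mul_add_one, sub_add_cancel]
  funext a b
  have := all ((a - b) / 2) ((a - b) % 2) (by omega) b
  rwa [show b + ((a - b) % 2 + 2 * ((a - b) / 2)) = a by omega] at this

theorem IsWave.eq_waveOf_diagProfile {w : ℤ → ℤ → M} (hw : IsWave w) (hrow : ∀ a, w a 0 = 0) :
    w = waveOf (diagProfile w) := by
  refine sub_eq_zero.mp ((hw.sub (isWave_waveOf _)).eq_zero (fun a => ?_) (fun x => ?_))
  · simp [waveOf, hrow]
  · have h01 : diagProfile w (x % 2) = 0 := by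
      rcases Int.emod_two_eq_zero_or_one x with h | h <;> simp [h, diagProfile, hrow]
    change diagProfile w x - diagProfile (waveOf (diagProfile w)) x = 0
    rw [diagProfile_waveOf, h01, sub_zero, sub_self]

theorem IsWave.of_box {N N' : ℤ} (hN : 0 < N) (hN' : 0 < N') {w : ℤ → ℤ → M}
    (hw : IsReflectionInvariant N N' w)
    (hbox : ∀ a b, 0 ≤ a → a ≤ N → 0 ≤ b → b ≤ N' →
      w (a - 1) b + w (a + 1) b = w a (b - 1) + w a (b + 1)) : IsWave w := by
  set D : ℤ → ℤ → M := fun a b => w (a - 1) b + w (a + 1) b - (w a (b - 1) + w a (b + 1))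
  have hD : IsReflectionInvariant N N' D := by
    constructor <;> intro a b <;> simp only [D]
    · rw [show -a - 1 = -(a + 1) by ring, show -a + 1 = -(a - 1) by ring]
      simp only [hw.neg_left, add_comm]
    · rw [show a + 2 * N - 1 = a - 1 + 2 * N by ring, show a + 2 * N + 1 = a + 1 + 2 * N by ring]
      simp only [hw.periodic_left]
    · rw [show -b - 1 = -(b + 1) by ring, show -b + 1 = -(b - 1) by ring]
      simp only [hw.neg_right, add_comm]
    · rw [show b + 2 * N' - 1 = b - 1 + 2 * N' by ring,
        show b + 2 * N' + 1 = b + 1 + 2 * N' by ring]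
      simp only [hw.periodic_right]
  intro a b
  obtain ⟨ha, ha'⟩ := zigzag_mem_Icc hN a
  obtain ⟨hb, hb'⟩ := zigzag_mem_Icc hN' b
  rw [← sub_eq_zero]
  change D a b = 0
  rw [← hD.zigzag_zigzag]
  exact sub_eq_zero.mpr (hbox _ _ ha ha' hb hb')

end wave

theorem CharTwo.add_add_add_eq_zero_iff {R : Type*} [Ring R] [CharP R 2] {x y z t : R} :
    x + y + z + t = 0 ↔ x + y = z + t := by
  rw [add_assoc (x + y), CharTwo.add_eq_zero]

section grid

variable {m n : ℤ}

/-- Grid point `(i, j)` reads `F` at `(i + 1, j + 1)`, so that the grid lies strictly inside the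
frame `a ∈ {0, m + 1}`, `b ∈ {0, n + 1}`. -/
def gridRestrict (m n : ℤ) (F : ℤ → ℤ → ZMod 2) (i j : ℤ) : ZMod 2 :=
  if InGrid m n i j then F (i + 1) (j + 1) else 0

/-- In characteristic `2` the even reflection in a frame line is also the odd one, so this
extension keeps solving the wave equation across the frame. -/
def reflectExt (m n : ℤ) (v : ℤ → ℤ → ZMod 2) (a b : ℤ) : ZMod 2 :=
  v (zigzag (m + 1) a - 1) (zigzag (n + 1) b - 1)

theorem gridRestrict_of_mem {F : ℤ → ℤ → ZMod 2} (hF : VanishesOnFrame (m + 1) (n + 1) F)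
    {i j : ℤ} (hi : -1 ≤ i) (hi' : i ≤ m) (hj : -1 ≤ j) (hj' : j ≤ n) :
    gridRestrict m n F i j = F (i + 1) (j + 1) := by
  by_cases h : InGrid m n i j
  · simp [gridRestrict, h]
  · simp only [gridRestrict, h, if_false]
    simp only [InGrid] at h
    rcases (by omega : i = -1 ∨ i = m ∨ j = -1 ∨ j = n) with rfl | rfl | rfl | rfl
    · simp [(hF _).1]
    · simp [(hF _).2.1]
    · simp [(hF _).2.2.1]
    · simp [(hF _).2.2.2]

theorem gridRestrict_mem_harm {F : ℤ → ℤ → ZMod 2} (hF : IsWave F)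
    (hframe : VanishesOnFrame (m + 1) (n + 1) F) : gridRestrict m n F ∈ harm m n := by
  refine ⟨fun i j h => by simp [gridRestrict, h], fun i j h => ?_⟩
  obtain ⟨hi, hi', hj, hj'⟩ := h
  rw [CharTwo.add_add_add_eq_zero_iff,
    gridRestrict_of_mem hframe (by omega) (by omega) (by omega) (by omega),
    gridRestrict_of_mem hframe (by omega) (by omega) (by omega) (by omega),
    gridRestrict_of_mem hframe (by omega) (by omega) (by omega) (by omega),
    gridRestrict_of_mem hframe (by omega) (by omega) (by omega) (by omega)]
  simpa using hF (i + 1) (j + 1)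

theorem reflectExt_of_mem {v : ℤ → ℤ → ZMod 2} {a b : ℤ} (ha : 0 ≤ a) (ha' : a ≤ m + 1)
    (hb : 0 ≤ b) (hb' : b ≤ n + 1) : reflectExt m n v a b = v (a - 1) (b - 1) := by
  rw [reflectExt, zigzag_of_mem ha ha', zigzag_of_mem hb hb']

theorem isReflectionInvariant_reflectExt (v : ℤ → ℤ → ZMod 2) :
    IsReflectionInvariant (m + 1) (n + 1) (reflectExt m n v) where
  neg_left a b := by simp only [reflectExt, zigzag_neg]
  periodic_left a b := by simp only [reflectExt, zigzag_periodic a]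
  neg_right a b := by simp only [reflectExt, zigzag_neg]
  periodic_right a b := by simp only [reflectExt, zigzag_periodic b]

theorem vanishesOnFrame_reflectExt (hm : 0 ≤ m) (hn : 0 ≤ n) {v : ℤ → ℤ → ZMod 2}
    (hv : ∀ i j, ¬ InGrid m n i j → v i j = 0) :
    VanishesOnFrame (m + 1) (n + 1) (reflectExt m n v) := fun t => by
  refine ⟨hv _ _ ?_, hv _ _ ?_, hv _ _ ?_, hv _ _ ?_⟩ <;>
    simp only [InGrid, zigzag_of_mem le_rfl (by omega : (0 : ℤ) ≤ m + 1),
      zigzag_of_mem le_rfl (by omega : (0 : ℤ) ≤ n + 1),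
      zigzag_of_mem (by omega : (0 : ℤ) ≤ m + 1) le_rfl,
      zigzag_of_mem (by omega : (0 : ℤ) ≤ n + 1) le_rfl] <;>
    omega

theorem isWave_reflectExt (hm : 0 ≤ m) (hn : 0 ≤ n) {v : ℤ → ℤ → ZMod 2} (hv : v ∈ harm m n) :
    IsWave (reflectExt m n v) := by
  have hinv := isReflectionInvariant_reflectExt (m := m) (n := n) v
  have hfr := vanishesOnFrame_reflectExt hm hn hv.1
  refine IsWave.of_box (by omega) (by omega) hinv fun a b ha ha' hb hb' => ?_
  rcases (by omega : a = 0 ∨ a = m + 1 ∨ b = 0 ∨ b = n + 1 ∨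
    (1 ≤ a ∧ a ≤ m ∧ 1 ≤ b ∧ b ≤ n)) with rfl | rfl | rfl | rfl | ⟨ha, ha', hb, hb'⟩
  · rw [(hfr _).1, (hfr _).1, zero_sub, hinv.neg_left]
    simp [CharTwo.add_self_eq_zero]
  · rw [(hfr _).2.1, (hfr _).2.1, add_sub_cancel_right, show m + 1 + 1 = -m + 2 * (m + 1) by ring,
      hinv.periodic_left, hinv.neg_left]
    simp [CharTwo.add_self_eq_zero]
  · rw [(hfr _).2.2.1, (hfr _).2.2.1, zero_sub, hinv.neg_right]
    simp [CharTwo.add_self_eq_zero]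
  · rw [(hfr _).2.2.2, (hfr _).2.2.2, add_sub_cancel_right,
      show n + 1 + 1 = -n + 2 * (n + 1) by ring, hinv.periodic_right, hinv.neg_right]
    simp [CharTwo.add_self_eq_zero]
  · have := hv.2 (a - 1) (b - 1) ⟨by omega, by omega, by omega, by omega⟩
    rw [reflectExt_of_mem (by omega) (by omega) (by omega) (by omega),
      reflectExt_of_mem (by omega) (by omega) (by omega) (by omega),
      reflectExt_of_mem (by omega) (by omega) (by omega) (by omega),
      reflectExt_of_mem (by omega) (by omega) (by omega) (by omega),
      ← CharTwo.add_add_add_eq_zero_iff]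
    simpa only [add_sub_cancel_right, sub_add_cancel] using this

theorem gridRestrict_reflectExt {v : ℤ → ℤ → ZMod 2} (hv : ∀ i j, ¬ InGrid m n i j → v i j = 0) :
    gridRestrict m n (reflectExt m n v) = v := by
  funext i j
  by_cases h : InGrid m n i j
  · obtain ⟨hi, hi', hj, hj'⟩ := h
    rw [gridRestrict, if_pos ⟨hi, hi', hj, hj'⟩,
      reflectExt_of_mem (by omega) (by omega) (by omega) (by omega),
      add_sub_cancel_right, add_sub_cancel_right]
  · rw [gridRestrict, if_neg h, hv i j h]

theorem reflectExt_gridRestrict (hm : 0 ≤ m) (hn : 0 ≤ n) {F : ℤ → ℤ → ZMod 2}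
    (hinv : IsReflectionInvariant (m + 1) (n + 1) F) (hframe : VanishesOnFrame (m + 1) (n + 1) F) :
    reflectExt m n (gridRestrict m n F) = F := by
  funext a b
  obtain ⟨ha, ha'⟩ := zigzag_mem_Icc (by omega : 0 < m + 1) a
  obtain ⟨hb, hb'⟩ := zigzag_mem_Icc (by omega : 0 < n + 1) b
  rw [reflectExt, gridRestrict_of_mem hframe (by omega) (by omega) (by omega) (by omega),
    sub_add_cancel, sub_add_cancel, hinv.zigzag_zigzag]

theorem isReflectionInvariant_waveOf {N N' : ℤ} {Q : ℤ → ZMod 2} (he : Q.Even)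
    (hp : Q.Periodic (2 * N)) (hp' : Q.Periodic (2 * N')) :
    IsReflectionInvariant N N' (waveOf Q) where
  neg_left a b := by rw [waveOf_neg_left he, ZMod.neg_eq_self_mod_two]
  periodic_left a b := by
    simp only [waveOf]
    rw [show a + 2 * N + b = a + b + 2 * N by ring, show a + 2 * N - b = a - b + 2 * N by ring,
      hp, hp]
  neg_right a b := by rw [waveOf_neg_right, ZMod.neg_eq_self_mod_two]
  periodic_right a b := by
    simp only [waveOf]
    rw [← add_assoc, sub_add_eq_sub_sub, hp', hp'.sub_eq]

end grid

theorem Function.periodic_and_periodic_iff_periodic_gcd {β : Type*} {f : ℤ → β} {a b : ℤ} :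
    f.Periodic a ∧ f.Periodic b ↔ f.Periodic (Int.gcd a b) := by
  constructor
  · rintro ⟨ha, hb⟩
    rw [Int.gcd_eq_gcd_ab, mul_comm a, mul_comm b]
    exact (ha.int_mul _).add_period (hb.int_mul _)
  · intro h
    obtain ⟨k, hk⟩ := Int.gcd_dvd_left (a := a) (b := b)
    obtain ⟨l, hl⟩ := Int.gcd_dvd_right (a := a) (b := b)
    have hk' : a = k * Int.gcd a b := by rw [mul_comm]; exact hk
    have hl' : b = l * Int.gcd a b := by rw [mul_comm]; exact hl
    exact ⟨hk' ▸ h.int_mul k, hl' ▸ h.int_mul l⟩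

def polarizedKernel (m n r : ℤ) : Submodule (ZMod 2) (ℤ → ℤ → ZMod 2) :=
  harm m n ⊓ vanishOn (fun i j => (i + j) % 2 = r)

theorem kerBW_eq_polarizedKernel (m n : ℤ) : kerBW m n = polarizedKernel m n 1 := by
  simp only [kerBW, polarizedKernel, Int.odd_iff]

theorem kerWB_eq_polarizedKernel (m n : ℤ) : kerWB m n = polarizedKernel m n 0 := by
  simp only [kerWB, polarizedKernel, Int.even_iff]

/-- The profiles `diagProfile (reflectExt m n v)` of `v ∈ polarizedKernel m n r`, where
`g = gcd (m + 1) (n + 1)`. -/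
def admissibleProfiles (g r : ℤ) : Set (ℤ → ZMod 2) :=
  {Q | Q.Even ∧ Q.Periodic (2 * g) ∧ Q 0 = 0 ∧ Q 1 = 0 ∧ ∀ x, x % 2 = r → Q x = 0}

section kernel

variable {m n r : ℤ}

theorem periodic_two_mul_gcd_iff {β : Type*} {Q : ℤ → β} :
    Q.Periodic (2 * (m + 1)) ∧ Q.Periodic (2 * (n + 1)) ↔
      Q.Periodic (2 * (Int.gcd (m + 1) (n + 1) : ℤ)) := by
  rw [Function.periodic_and_periodic_iff_periodic_gcd, Int.gcd_mul_left]
  norm_num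

theorem diagProfile_reflectExt_mem (hm : 0 ≤ m) (hn : 0 ≤ n) {v : ℤ → ℤ → ZMod 2}
    (hv : v ∈ polarizedKernel m n r) :
    diagProfile (reflectExt m n v) ∈ admissibleProfiles (Int.gcd (m + 1) (n + 1)) r := by
  obtain ⟨hharm, hpar⟩ := Submodule.mem_inf.mp hv
  have hframe := vanishesOnFrame_reflectExt hm hn hharm.1
  have hrow : ∀ a, reflectExt m n v a 0 = 0 := fun a => (hframe a).2.2.1
  rw [(isWave_reflectExt hm hn hharm).eq_waveOf_diagProfile hrow,
    vanishesOnFrame_waveOf_iff] at hframe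
  obtain ⟨he, hp, hp'⟩ := hframe
  refine ⟨he, periodic_two_mul_gcd_iff.mp ⟨hp, hp'⟩, hrow 0, hrow 1, fun x hx => hpar _ _ ?_⟩
  have := zigzag_emod_two (N := m + 1) (x - x / 2)
  have := zigzag_emod_two (N := n + 1) (x / 2)
  omega

theorem gridRestrict_waveOf_diagProfile (hm : 0 ≤ m) (hn : 0 ≤ n) {v : ℤ → ℤ → ZMod 2}
    (hv : v ∈ harm m n) : gridRestrict m n (waveOf (diagProfile (reflectExt m n v))) = v := by
  have hrow : ∀ a, reflectExt m n v a 0 = 0 := fun a =>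
    (vanishesOnFrame_reflectExt hm hn hv.1 a).2.2.1
  rw [← (isWave_reflectExt hm hn hv).eq_waveOf_diagProfile hrow, gridRestrict_reflectExt hv.1]

theorem gridRestrict_waveOf_mem {Q : ℤ → ZMod 2}
    (hQ : Q ∈ admissibleProfiles (Int.gcd (m + 1) (n + 1)) r) :
    gridRestrict m n (waveOf Q) ∈ polarizedKernel m n r := by
  obtain ⟨he, hp, -, -, hpar⟩ := hQ
  obtain ⟨hp, hp'⟩ := periodic_two_mul_gcd_iff.mpr hp
  refine Submodule.mem_inf.mpr ⟨gridRestrict_mem_harm (isWave_waveOf Q)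
    (vanishesOnFrame_waveOf_iff.mpr ⟨he, hp, hp'⟩), fun i j h => ?_⟩
  by_cases hg : InGrid m n i j
  · simp only [gridRestrict, hg, if_true, waveOf, hpar _ (by omega : (i + 1 + (j + 1)) % 2 = r),
      hpar _ (by omega : (i + 1 - (j + 1)) % 2 = r), sub_self]
  · simp [gridRestrict, hg]

theorem diagProfile_reflectExt_gridRestrict_waveOf (hm : 0 ≤ m) (hn : 0 ≤ n) {Q : ℤ → ZMod 2}
    (hQ : Q ∈ admissibleProfiles (Int.gcd (m + 1) (n + 1)) r) :
    diagProfile (reflectExt m n (gridRestrict m n (waveOf Q))) = Q := by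
  obtain ⟨he, hp, h0, h1, -⟩ := hQ
  obtain ⟨hp, hp'⟩ := periodic_two_mul_gcd_iff.mpr hp
  rw [reflectExt_gridRestrict hm hn (isReflectionInvariant_waveOf he hp hp')
    (vanishesOnFrame_waveOf_iff.mpr ⟨he, hp, hp'⟩)]
  funext x
  rcases Int.emod_two_eq_zero_or_one x with h | h <;> simp [diagProfile_waveOf, h, h0, h1]

theorem ncard_polarizedKernel (hm : 0 ≤ m) (hn : 0 ≤ n) :
    (polarizedKernel m n r : Set (ℤ → ℤ → ZMod 2)).ncard =
      (admissibleProfiles (Int.gcd (m + 1) (n + 1)) r).ncard := by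
  have himage : (polarizedKernel m n r : Set (ℤ → ℤ → ZMod 2)) =
      (fun Q => gridRestrict m n (waveOf Q)) '' admissibleProfiles (Int.gcd (m + 1) (n + 1)) r := by
    ext v
    refine ⟨fun hv => ⟨_, diagProfile_reflectExt_mem hm hn hv, ?_⟩, ?_⟩
    · exact gridRestrict_waveOf_diagProfile hm hn (Submodule.mem_inf.mp hv).1
    · rintro ⟨Q, hQ, rfl⟩
      exact gridRestrict_waveOf_mem hQ
  have hinv : Set.LeftInvOn (fun v => diagProfile (reflectExt m n v))
      (fun Q => gridRestrict m n (waveOf Q)) (admissibleProfiles (Int.gcd (m + 1) (n + 1)) r) :=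
    fun Q hQ => diagProfile_reflectExt_gridRestrict_waveOf hm hn hQ
  rw [himage, hinv.injOn.ncard_image]

end kernel
section count

open Finset

variable {g r : ℤ}

/-- Since `Q = Q ∘ zigzag g`, a profile is determined by its values on `[0, g]`, which are free
except at `0`, `1` and the points of parity `r`. -/
noncomputable def admissibleProfilesEquiv (hg : 0 < g) :
    admissibleProfiles g r ≃ ({y ∈ Icc 2 g | y % 2 ≠ r} → ZMod 2) where
  toFun Q y := Q.1 y
  invFun f := ⟨fun x => if h : zigzag g x ∈ {y ∈ Icc 2 g | y % 2 ≠ r} then f ⟨_, h⟩ else 0, by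
    refine ⟨fun x => by simp only [zigzag_neg], fun x => by simp only [zigzag_periodic x],
      ?_, ?_, fun x hx => ?_⟩
    · simp [zigzag_of_mem le_rfl hg.le]
    · simp [zigzag_of_mem zero_le_one hg]
    · simp [zigzag_emod_two, hx]⟩
  left_inv := by
    rintro ⟨Q, he, hp, h0, h1, hpar⟩
    ext x
    obtain ⟨hx, hx'⟩ := zigzag_mem_Icc hg x
    dsimp only
    split_ifs with h
    · exact comp_zigzag he hp x
    · rw [← comp_zigzag he hp x]
      simp only [mem_filter, mem_Icc, not_and_or, not_not] at h
      rcases (by omega : zigzag g x = 0 ∨ zigzag g x = 1 ∨ zigzag g x % 2 = r) with h' | h' | h'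
      · rw [h', h0]
      · rw [h', h1]
      · rw [hpar _ h']
  right_inv f := by
    ext ⟨y, hy⟩
    obtain ⟨hy₀, hy₁⟩ := mem_Icc.mp (mem_filter.mp hy).1
    simp only [zigzag_of_mem (by omega : 0 ≤ y) hy₁, dif_pos hy]

theorem ncard_admissibleProfiles (hg : 0 < g) :
    (admissibleProfiles g r).ncard = 2 ^ #{y ∈ Icc 2 g | y % 2 ≠ r} := by
  rw [← Nat.card_coe_set_eq, Nat.card_congr (admissibleProfilesEquiv hg), Nat.card_fun,
    Nat.card_zmod, Nat.card_eq_fintype_card, Fintype.card_coe]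

theorem card_filter_emod_two_ne {κ : ℕ} (hr : r = 0 ∨ r = 1) (h₁ : 2 * κ + 1 - r ≤ g)
    (h₂ : g ≤ 2 * κ + 2 - r) : #{y ∈ Icc 2 g | y % 2 ≠ r} = κ := by
  rw [← card_range κ]
  refine card_nbij' (fun y => ((y - 3 + r) / 2).toNat) (fun t => 2 * t + 3 - r) ?_ ?_ ?_ ?_ <;>
    intro y hy <;>
    simp only [coe_filter, coe_range, mem_Icc, Set.mem_ofPred_eq, Set.mem_Iio] at hy ⊢ <;>
    omega

end count

theorem Submodule.ncard_diff_zero_union_diff_zero {R M : Type*} [Semiring R] [AddCommMonoid M]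
    [Module R M] {p q : Submodule R M} (hpq : Disjoint p q) (hp : (p : Set M).Finite)
    (hq : (q : Set M).Finite) :
    (((p : Set M) \ {0}) ∪ ((q : Set M) \ {0})).ncard =
      ((p : Set M).ncard - 1) + ((q : Set M).ncard - 1) := by
  rw [Set.ncard_union_eq _ hp.sdiff hq.sdiff, Set.ncard_sdiff_singleton_of_mem p.zero_mem,
    Set.ncard_sdiff_singleton_of_mem q.zero_mem]
  exact Set.disjoint_left.mpr fun v hvp hvq => hvp.2 (Submodule.disjoint_def.mp hpq v hvp.1 hvq.1)

theorem disjoint_kerBW_kerWB (m n : ℤ) : Disjoint (kerBW m n) (kerWB m n) := by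
  refine Submodule.disjoint_def.mpr fun v hBW hWB => funext fun i => funext fun j => ?_
  rcases Int.even_or_odd (i + j) with h | h
  · exact (Submodule.mem_inf.mp hWB).2 i j h
  · exact (Submodule.mem_inf.mp hBW).2 i j h

/-- the number of nonzero polarized harmonic functions equals
2^β + 2^ω − 2. -/
theorem count_nonzero_polarized (m n : ℤ) (hm : 2 ≤ m) (hn : 2 ≤ n)
    (c β ω : ℕ) (hc : c = Int.gcd (m + 1) (n + 1) - 1)
    (hβ : 2 * β = c + c % 2) (hω : 2 * ω = c - c % 2) :
    (((kerBW m n : Set (ℤ → ℤ → ZMod 2)) \ {0}) ∪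
      ((kerWB m n : Set (ℤ → ℤ → ZMod 2)) \ {0})).ncard = 2 ^ β + 2 ^ ω - 2 := by
  have hg : 0 < Int.gcd (m + 1) (n + 1) := Int.gcd_pos_of_ne_zero_left _ (by omega)
  have hBW : (kerBW m n : Set (ℤ → ℤ → ZMod 2)).ncard = 2 ^ β := by
    rw [kerBW_eq_polarizedKernel, ncard_polarizedKernel (by omega) (by omega),
      ncard_admissibleProfiles (by omega),
      card_filter_emod_two_ne (κ := β) (by norm_num) (by omega) (by omega)]
  have hWB : (kerWB m n : Set (ℤ → ℤ → ZMod 2)).ncard = 2 ^ ω := by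
    rw [kerWB_eq_polarizedKernel, ncard_polarizedKernel (by omega) (by omega),
      ncard_admissibleProfiles (by omega),
      card_filter_emod_two_ne (κ := ω) (by norm_num) (by omega) (by omega)]
  rw [Submodule.ncard_diff_zero_union_diff_zero (disjoint_kerBW_kerWB m n)
    (Set.finite_of_ncard_pos (by rw [hBW]; positivity))
    (Set.finite_of_ncard_pos (by rw [hWB]; positivity)), hBW, hWB]
  have := Nat.one_le_two_pow (n := β)
  have := Nat.one_le_two_pow (n := ω)
  omega
end

section
/- (Proposition 3(i), diagonal symmetry.) Let m ≥ n ≥ 2 and let v be a harmonic function on the m×n rectangular grid. Then for all i, j with 0 ≤ i, j ≤ n−1 one has v(i,j) = v(j,i). -/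
open Matrix
open Polynomial (aeval Chebyshev.S)
open scoped Polynomial

section

variable {R ι : Type*} [CommRing R] [Fintype ι] [DecidableEq ι]

theorem Matrix.IsSymm.aeval {A : Matrix ι ι R} (hA : A.IsSymm) (p : R[X]) :
    (aeval A p).IsSymm := by
  induction p using Polynomial.induction_on' with
  | add p q hp hq => simpa using hp.add hq
  | monomial k c => simpa [Algebra.smul_def] using (hA.pow k).smul c

theorem Matrix.IsSymm.aeval_mulVec_dotProduct_comm {A : Matrix ι ι R} (hA : A.IsSymm)
    (p q : R[X]) (x y : ι → R) :
    Polynomial.aeval A p *ᵥ x ⬝ᵥ Polynomial.aeval A q *ᵥ y =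
      Polynomial.aeval A q *ᵥ x ⬝ᵥ Polynomial.aeval A p *ᵥ y := by
  have hdot : ∀ p q : R[X], Polynomial.aeval A p *ᵥ x ⬝ᵥ Polynomial.aeval A q *ᵥ y =
      x ⬝ᵥ Polynomial.aeval A (p * q) *ᵥ y := by
    intro p q
    rw [← vecMul_transpose, (hA.aeval p).eq, ← dotProduct_mulVec, mulVec_mulVec,
      Polynomial.aeval_mul]
  rw [hdot, hdot, mul_comm]

theorem Matrix.eq_aeval_chebyshevS_mulVec_of_recurrence {A : Matrix ι ι R} {x : ℤ → ι → R}
    {b : ℕ} (hx : x (-1) = 0)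
    (hrec : ∀ a : ℕ, a + 1 < b → x (a + 1) = A *ᵥ x a - x (a - 1)) :
    ∀ a : ℕ, a < b → x a = aeval A (Chebyshev.S R a) *ᵥ x 0 := by
  intro a
  induction a using Nat.twoStepInduction with
  | zero => simp
  | one => intro h; simpa [hx] using hrec 0 h
  | more a ih ih1 =>
    intro ha
    have hS : aeval A (Chebyshev.S R ↑(a + 2)) =
        A * aeval A (Chebyshev.S R ↑(a + 1)) - aeval A (Chebyshev.S R a) := by
      push_cast
      simp [Polynomial.Chebyshev.S_add_two]
    have hx2 : x ↑(a + 2) = A *ᵥ x ↑(a + 1) - x a := by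
      simpa [add_assoc] using hrec (a + 1) ha
    rw [hx2, ih1 (by omega), ih (by omega), hS, sub_mulVec, mulVec_mulVec]

end

namespace SimpleGraph

variable {R : Type*} [CommRing R]

instance (n : ℕ) : DecidableRel (pathGraph n).Adj :=
  fun _ _ => decidable_of_iff _ pathGraph_adj.symm

theorem pathGraph_adjMatrix_mulVec_apply {n : ℕ} (f : ℤ → R) (hf0 : f (-1) = 0)
    (hfn : f n = 0) (k : Fin n) :
    ((pathGraph n).adjMatrix R *ᵥ fun l : Fin n => f l) k = f (k - 1) + f (k + 1) := by
  have hsplit : ∀ l : Fin n, (if (pathGraph n).Adj k l then (1 : R) else 0) * f l =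
      (if (l : ℕ) + 1 = k then f l else 0) + (if (k : ℕ) + 1 = l then f l else 0) := by
    intro l
    simp only [pathGraph_adj]
    split_ifs <;> first | omega | simp
  have hsucc :
      (if (k : ℕ) + 1 ∈ Finset.range n then f ((k + 1 : ℕ) : ℤ) else 0) = f (k + 1) := by
    split_ifs with h
    · push_cast; rfl
    · rw [show (k : ℤ) + 1 = n by simp at h; omega, hfn]
  simp only [mulVec, dotProduct, adjMatrix_apply, hsplit, Finset.sum_add_distrib]
  rw [Fin.sum_univ_eq_sum_range (fun l => if l + 1 = (k : ℕ) then f l else 0),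
    Fin.sum_univ_eq_sum_range (fun l => if (k : ℕ) + 1 = l then f l else 0),
    Finset.sum_ite_eq, hsucc]
  obtain ⟨_ | k, hk⟩ := k
  · simp [hf0]
  · have hk' : k < n := by omega
    simp only [Nat.add_right_cancel_iff, Finset.sum_ite_eq', Finset.mem_range, if_pos hk']
    push_cast
    ring_nf

theorem row_eq_aeval_chebyshevS_mulVec_pathGraph_adjMatrix {n b : ℕ} {u : ℤ → ℤ → R}
    (hbot : ∀ k : Fin n, u (-1) k = 0) (hleft : ∀ a : ℕ, a < b → u a (-1) = 0)
    (hright : ∀ a : ℕ, a < b → u a n = 0)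
    (hrec : ∀ (a : ℕ) (k : Fin n), a + 1 < b →
      u (a + 1) k = u a (k - 1) + u a (k + 1) - u (a - 1) k) (a : ℕ) (ha : a < b) :
    (fun k : Fin n => u a k) =
      aeval ((pathGraph n).adjMatrix R) (Chebyshev.S R a) *ᵥ fun k : Fin n => u 0 k := by
  refine eq_aeval_chebyshevS_mulVec_of_recurrence (x := fun (a : ℤ) (k : Fin n) => u a k)
    (funext hbot)    (fun a h => funext fun k => ?_) a ha
  rw [Pi.sub_apply, pathGraph_adjMatrix_mulVec_apply _ (hleft a (by omega)) (hright a (by omega)),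
    hrec a k h]

theorem pathGraph_single_eq_aeval_chebyshevS_mulVec {n a : ℕ} (ha : a < n) :
    (Pi.single ⟨a, ha⟩ 1 : Fin n → R) =
      aeval ((pathGraph n).adjMatrix R) (Chebyshev.S R a) *ᵥ Pi.single ⟨0, by omega⟩ 1 := by
  have hsingle (b : ℕ) (hb : b < n) :
      (Pi.single ⟨b, hb⟩ 1 : Fin n → R) =
        fun k : Fin n => if (b : ℤ) = k then 1 else 0 := by
    ext k
    simp [Pi.single_apply, Fin.ext_iff, eq_comm]
  rw [hsingle a ha, hsingle 0 (by omega)]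
  refine row_eq_aeval_chebyshevS_mulVec_pathGraph_adjMatrix
    (u := fun a k => if a = k then (1 : R) else 0)
    (fun k => ?_) (fun b _ => ?_) (fun b hb => ?_) (fun b k h => ?_) a ha <;>
  split_ifs <;> first | omega | contradiction | ring

end SimpleGraph

theorem IsHarmonic.row_eq_aeval_chebyshevS_mulVec {m : ℤ} {n : ℕ} {v : ℤ → ℤ → ZMod 2}
    (hv : IsHarmonic m n v) (hmn : (n : ℤ) ≤ m) {a : ℕ} (ha : a < n) :
    (fun k : Fin n => v a k) =
      aeval ((SimpleGraph.pathGraph n).adjMatrix (ZMod 2)) (Chebyshev.S (ZMod 2) a) *ᵥ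
        fun k : Fin n => v 0 k := by
  obtain ⟨hzero, hharm⟩ := hv
  refine SimpleGraph.row_eq_aeval_chebyshevS_mulVec_pathGraph_adjMatrix
    (fun k => hzero _ _ (by simp [InGrid])) (fun a _ => hzero _ _ (by simp [InGrid]))
    (fun a _ => hzero _ _ (by simp [InGrid])) (fun a k h => ?_) a ha
  have := hharm a k ⟨by omega, by omega, by omega, by omega⟩
  linear_combination this - (v a (k - 1) + v a (k + 1)) * (by decide : (2 : ZMod 2) = 0)

theorem diagonal_symmetry_general (m n : ℤ) (hmn : n ≤ m)
    (v : ℤ → ℤ → ZMod 2) (hv : IsHarmonic m n v) :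
    ∀ i j : ℤ, 0 ≤ i → i ≤ n - 1 → 0 ≤ j → j ≤ n - 1 → v i j = v j i := by
  intro i j hi0 hi hj0 hj
  lift n to ℕ using (by omega)
  lift i to ℕ using hi0
  lift j to ℕ using hj0
  have hin : i < n := by omega
  have hjn : j < n := by omega
  calc v i j = Pi.single ⟨j, hjn⟩ (1 : ZMod 2) ⬝ᵥ fun k : Fin n => v i k := by
        rw [single_dotProduct, one_mul]
    _ = Pi.single ⟨i, hin⟩ 1 ⬝ᵥ fun k : Fin n => v j k := by
      rw [SimpleGraph.pathGraph_single_eq_aeval_chebyshevS_mulVec hin,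
        SimpleGraph.pathGraph_single_eq_aeval_chebyshevS_mulVec hjn,
        hv.row_eq_aeval_chebyshevS_mulVec hmn hin, hv.row_eq_aeval_chebyshevS_mulVec hmn hjn]
      exact (SimpleGraph.isSymm_adjMatrix _).aeval_mulVec_dotProduct_comm _ _ _ _
    _ = v j i := by rw [single_dotProduct, one_mul]

/-- Proposition 3(i): diagonal symmetry of harmonic functions. -/
theorem diagonal_symmetry (m n : ℤ) (hn : 2 ≤ n) (hmn : n ≤ m)
    (v : ℤ → ℤ → ZMod 2) (hv : IsHarmonic m n v) :
    ∀ i j : ℤ, 0 ≤ i → i ≤ n - 1 → 0 ≤ j → j ≤ n - 1 → v i j = v j i :=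
  diagonal_symmetry_general m n hmn v hv
end

section
/- (Proposition 3(ii), reflection across a zero column.) Let m, n ≥ 2 and let v be a harmonic function on the m×n rectangular grid. Suppose v vanishes along the column x = m₀, i.e. v(m₀, j) = 0 for all 0 ≤ j ≤ n−1, where 0 ≤ m₀ ≤ m−1. Then for every i ≥ 0 and every j, if both (m₀−i, j) and (m₀+i, j) lie in the grid, one has v(m₀−i, j) = v(m₀+i, j). -/
/-!
Put `d k j = v (m₀ + k) j - v (m₀ - k) j`. Subtracting the harmonicity relations at
`(m₀ - k, j)` and `(m₀ + k, j)` gives `d (k+1) j + d (k-1) j + d k (j-1) + d k (j+1) = 0` on the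
rows of the grid (outside them `d` vanishes), so `d` is determined column by column from `d 0`
and `d 1`. Trivially `d 0 = 0`; and since `v` vanishes on column `m₀`, harmonicity at `(m₀, j)`
gives `v (m₀ - 1) j + v (m₀ + 1) j = 0`, which in characteristic 2 says `d 1 = 0`.
-/

def reflectionDefect (v : ℤ → ℤ → ZMod 2) (m₀ k j : ℤ) : ZMod 2 :=
  v (m₀ + k) j - v (m₀ - k) j

section

variable {m n : ℤ} {v : ℤ → ℤ → ZMod 2}

theorem IsHarmonic.eq_zero_of_not_mem_rows (hv : IsHarmonic m n v) (i : ℤ) {j : ℤ}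
    (hj : ¬(0 ≤ j ∧ j ≤ n - 1)) : v i j = 0 :=
  hv.1 i j fun ⟨_, _, h₁, h₂⟩ => hj ⟨h₁, h₂⟩

theorem IsHarmonic.reflectionDefect_eq_zero_of_not_mem_rows (hv : IsHarmonic m n v)
    (m₀ k : ℤ) {j : ℤ} (hj : ¬(0 ≤ j ∧ j ≤ n - 1)) : reflectionDefect v m₀ k j = 0 := by
  rw [reflectionDefect, hv.eq_zero_of_not_mem_rows _ hj, hv.eq_zero_of_not_mem_rows _ hj,
    sub_zero]

theorem IsHarmonic.reflectionDefect_add_one (hv : IsHarmonic m n v) {m₀ k j : ℤ} (hk : 0 ≤ k)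
    (hk₀ : 0 ≤ m₀ - k) (hk₁ : m₀ + k ≤ m - 1) (hj : 0 ≤ j ∧ j ≤ n - 1) :
    reflectionDefect v m₀ (k + 1) j = -(reflectionDefect v m₀ (k - 1) j +
      reflectionDefect v m₀ k (j - 1) + reflectionDefect v m₀ k (j + 1)) := by
  have hl := hv.2 (m₀ - k) j ⟨hk₀, by omega, hj⟩
  have hr := hv.2 (m₀ + k) j ⟨by omega, hk₁, hj⟩
  simp only [reflectionDefect]
  ring_nf at hl hr ⊢
  linear_combination hr - hl

theorem IsHarmonic.reflectionDefect_one (hv : IsHarmonic m n v) {m₀ : ℤ}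
    (hm₀ : 0 ≤ m₀ ∧ m₀ ≤ m - 1) (hz : ∀ j : ℤ, 0 ≤ j → j ≤ n - 1 → v m₀ j = 0) (j : ℤ) :
    reflectionDefect v m₀ 1 j = 0 := by
  have hcol (j : ℤ) : v m₀ j = 0 := by
    by_cases hj : 0 ≤ j ∧ j ≤ n - 1
    · exact hz j hj.1 hj.2
    · exact hv.eq_zero_of_not_mem_rows m₀ hj
  by_cases hj : 0 ≤ j ∧ j ≤ n - 1
  · have h := hv.2 m₀ j ⟨hm₀.1, hm₀.2, hj⟩
    rw [hcol, hcol, add_zero, add_zero] at h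
    rw [reflectionDefect, sub_eq_add_neg, CharTwo.neg_eq, add_comm, h]
  · exact hv.reflectionDefect_eq_zero_of_not_mem_rows m₀ 1 hj

theorem IsHarmonic.reflectionDefect_eq_zero (hv : IsHarmonic m n v) {m₀ : ℤ} {K : ℕ}
    (hK₀ : 0 ≤ m₀ - K) (hK₁ : m₀ + K ≤ m - 1) (hz : ∀ j : ℤ, 0 ≤ j → j ≤ n - 1 → v m₀ j = 0) :
    ∀ k : ℕ, k ≤ K → ∀ j, reflectionDefect v m₀ k j = 0 := by
  intro k
  induction k using Nat.twoStepInduction with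
  | zero => simp [reflectionDefect]
  | one => exact fun _ => hv.reflectionDefect_one ⟨by omega, by omega⟩ hz
  | more k ih₀ ih₁ =>
    intro hk j
    by_cases hj : 0 ≤ j ∧ j ≤ n - 1
    · have h := hv.reflectionDefect_add_one (m₀ := m₀) (k := k + 1) (by omega) (by omega)
        (by omega) hj
      push_cast at ih₁ h ⊢
      rw [add_assoc, one_add_one_eq_two, add_sub_cancel_right] at h
      rw [h, ih₀ (by omega), ih₁ (by omega), ih₁ (by omega), add_zero, add_zero, neg_zero]
    · exact hv.reflectionDefect_eq_zero_of_not_mem_rows m₀ _ hj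

end

theorem reflection_zero_column_general (m n : ℤ) (v : ℤ → ℤ → ZMod 2) (hv : IsHarmonic m n v)
    (m₀ : ℤ) (hz : ∀ j : ℤ, 0 ≤ j → j ≤ n - 1 → v m₀ j = 0) :
    ∀ i : ℤ, 0 ≤ i → ∀ j : ℤ, InGrid m n (m₀ - i) j → InGrid m n (m₀ + i) j →
      v (m₀ - i) j = v (m₀ + i) j := by
  intro i hi j hL hR
  lift i to ℕ using hi
  have h := hv.reflectionDefect_eq_zero hL.1 hR.2.1 hz i le_rfl j
  exact (sub_eq_zero.mp h).symm

/-- Proposition 3(ii): reflection across a zero column. -/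
theorem reflection_zero_column (m n : ℤ) (hm : 2 ≤ m) (hn : 2 ≤ n)
    (v : ℤ → ℤ → ZMod 2) (hv : IsHarmonic m n v)
    (m₀ : ℤ) (hm₀ : 0 ≤ m₀ ∧ m₀ ≤ m - 1)
    (hz : ∀ j : ℤ, 0 ≤ j → j ≤ n - 1 → v m₀ j = 0) :
    ∀ i : ℤ, 0 ≤ i → ∀ j : ℤ, InGrid m n (m₀ - i) j → InGrid m n (m₀ + i) j →
      v (m₀ - i) j = v (m₀ + i) j :=
  reflection_zero_column_general m n v hv m₀ hz
end

section
/- (Anti-diagonal symmetry, the analogue of Proposition 3(i) across the other diagonal.) Let m ≥ n ≥ 2 and let v be a harmonic function on the m×n rectangular grid. Then for all i, j with 0 ≤ i, j ≤ n−1 one has v(m−1−i, n−1−j) = v(m−1−j, n−1−i). -/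
/-!
Rotating the grid by a half turn, `(i, j) ↦ (m - 1 - i, n - 1 - j)`, preserves harmonicity and
maps the anti-diagonal corner square to the corner square at the origin, so it suffices to show
`v a b = v b a` there. In characteristic 2 this says that the defect `s a b = v a b + v b a`
vanishes. Adding the harmonic relations at `(a, b)` and `(b, a)` shows that `s` satisfies the
harmonic relation on the square, which expresses `s a b` through values with smaller first
coordinate; this relation is trivial next to the diagonal, where the relation of `v` itself at
`(a - 1, a - 1)` gives `s a (a - 1) = s (a - 1) (a - 2)` instead. Starting from `s = 0` on the
column `b = -1` outside the grid, induction on `a` gives `s a b = 0` for `b ≤ a`.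
-/

theorem InGrid.pointReflection {m n i j : ℤ} (h : InGrid m n i j) :
    InGrid m n (m - 1 - i) (n - 1 - j) := by
  simp only [InGrid] at h ⊢
  omega

theorem IsHarmonic.pointReflection {m n : ℤ} {v : ℤ → ℤ → ZMod 2} (hv : IsHarmonic m n v) :
    IsHarmonic m n (fun i j => v (m - 1 - i) (n - 1 - j)) := by
  refine ⟨fun i j hij => hv.1 _ _ fun h => hij ?_, fun i j hij => ?_⟩
  · simpa using h.pointReflection
  · have H := hv.2 _ _ hij.pointReflection
    beta_reduce
    rw [show m - 1 - (i - 1) = m - 1 - i + 1 by ring, show m - 1 - (i + 1) = m - 1 - i - 1 by ring,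
      show n - 1 - (j - 1) = n - 1 - j + 1 by ring, show n - 1 - (j + 1) = n - 1 - j - 1 by ring]
    linear_combination H

def symmDefect (v : ℤ → ℤ → ZMod 2) (a b : ℤ) : ZMod 2 := v a b + v b a

namespace IsHarmonic

variable {m n : ℤ} {v : ℤ → ℤ → ZMod 2}

theorem symmDefect_of_neg (hv : IsHarmonic m n v) {a b : ℤ} (hb : b < 0) :
    symmDefect v a b = 0 := by
  rw [symmDefect, hv.1 a b (by simp only [InGrid]; omega),
    hv.1 b a (by simp only [InGrid]; omega), add_zero]

theorem symmDefect_succ_left (hv : IsHarmonic m n v) (hnm : n ≤ m) {a b : ℤ}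
    (ha : 0 ≤ a) (ha' : a ≤ n - 1) (hb : 0 ≤ b) (hb' : b ≤ n - 1) :
    symmDefect v (a + 1) b = symmDefect v (a - 1) b + symmDefect v a (b - 1) +
      symmDefect v a (b + 1) := by
  have H₁ := hv.2 a b (by simp only [InGrid]; omega)
  have H₂ := hv.2 b a (by simp only [InGrid]; omega)
  rw [← CharTwo.add_eq_zero]
  simp only [symmDefect]
  linear_combination H₁ + H₂

theorem symmDefect_succ_self (hv : IsHarmonic m n v) (hnm : n ≤ m) {a : ℤ}
    (ha : 0 ≤ a) (ha' : a ≤ n - 1) :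
    symmDefect v (a + 1) a = symmDefect v a (a - 1) := by
  have H := hv.2 a a (by simp only [InGrid]; omega)
  rw [← CharTwo.add_eq_zero]
  simp only [symmDefect]
  linear_combination H

theorem symmDefect_eq_zero (hv : IsHarmonic m n v) (hnm : n ≤ m) {a b : ℤ}
    (hba : b ≤ a) (ha : a ≤ n - 1) : symmDefect v a b = 0 := by
  induction a using Int.strongRec (m := 0) generalizing b with
  | lt a ha₀ => exact hv.symmDefect_of_neg (by omega)
  | ge a ha₀ ih =>
    obtain hb | rfl | ⟨hb, rfl⟩ | hb : b < 0 ∨ b = a ∨ 0 ≤ b ∧ b = a - 1 ∨ 0 ≤ b ∧ b ≤ a - 2 :=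
      by omega
    · exact hv.symmDefect_of_neg hb
    · exact CharTwo.add_self_eq_zero _
    · have h := hv.symmDefect_succ_self hnm (a := a - 1) (by omega) (by omega)
      rw [sub_add_cancel] at h
      rw [h, ih (a - 1) (by omega) (by omega) (by omega)]
    · have h := hv.symmDefect_succ_left hnm (a := a - 1) (b := b)
        (by omega) (by omega) hb.1 (by omega)
      rw [sub_add_cancel] at h
      rw [h, ih (a - 1 - 1) (by omega) (by omega) (by omega),
        ih (a - 1) (by omega) (by omega) (by omega), ih (a - 1) (by omega) (by omega) (by omega)]
      simp

theorem apply_comm (hv : IsHarmonic m n v) (hnm : n ≤ m) {a b : ℤ}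
    (ha : a ≤ n - 1) (hb : b ≤ n - 1) : v a b = v b a := by
  rcases le_total b a with hba | hab
  · exact CharTwo.add_eq_zero.mp (hv.symmDefect_eq_zero hnm hba ha)
  · exact (CharTwo.add_eq_zero.mp (hv.symmDefect_eq_zero hnm hab hb)).symm

end IsHarmonic

theorem antidiagonal_symmetry_general (m n : ℤ) (hmn : n ≤ m)
    (v : ℤ → ℤ → ZMod 2) (hv : IsHarmonic m n v) :
    ∀ i j : ℤ, 0 ≤ i → i ≤ n - 1 → 0 ≤ j → j ≤ n - 1 →
      v (m - 1 - i) (n - 1 - j) = v (m - 1 - j) (n - 1 - i) := by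
  intro i j _ hi _ hj
  exact hv.pointReflection.apply_comm hmn hi hj

/-- anti-diagonal symmetry of harmonic functions. -/
theorem antidiagonal_symmetry (m n : ℤ) (hn : 2 ≤ n) (hmn : n ≤ m)
    (v : ℤ → ℤ → ZMod 2) (hv : IsHarmonic m n v) :
    ∀ i j : ℤ, 0 ≤ i → i ≤ n - 1 → 0 ≤ j → j ≤ n - 1 →
      v (m - 1 - i) (n - 1 - j) = v (m - 1 - j) (n - 1 - i) :=
  antidiagonal_symmetry_general m n hmn v hv
end

section
/- (Reflection across a zero row, the analogue of Proposition 3(ii).) Let m, n ≥ 2 and let v be a harmonic function on the m×n rectangular grid. Suppose v vanishes along the row y = n₀, i.e. v(i, n₀) = 0 for all 0 ≤ i ≤ m−1, where 0 ≤ n₀ ≤ n−1. Then for every j ≥ 0 and every i, if both (i, n₀−j) and (i, n₀+j) lie in the grid, one has v(i, n₀−j) = v(i, n₀+j). -/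
/-!
Harmonicity at a grid point determines the value of `v` at the point above (or below) it from
the three other neighbours. Starting from the zero row `n₀`, the rows `n₀ - j` and `n₀ + j`
therefore satisfy the same two-step recurrence with the same initial rows
(`j = 0`, and `j = 1` where the zero row makes `v(i, n₀ ± 1)` agree), so they coincide.
-/

namespace IsHarmonic

variable {m n : ℤ} {v : ℤ → ℤ → ZMod 2}

theorem apply_eq_zero_of_not_mem_cols (hv : IsHarmonic m n v) {i : ℤ}
    (hi : ¬(0 ≤ i ∧ i ≤ m - 1)) (j : ℤ) : v i j = 0 :=
  hv.1 i j fun ⟨h₀, h₁, _, _⟩ => hi ⟨h₀, h₁⟩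

theorem rows_eq_of_eqOn_cols (hv : IsHarmonic m n v) {a b : ℤ}
    (h : ∀ i, 0 ≤ i → i ≤ m - 1 → v i a = v i b) (i : ℤ) : v i a = v i b := by
  by_cases hi : 0 ≤ i ∧ i ≤ m - 1
  · exact h i hi.1 hi.2
  · rw [hv.apply_eq_zero_of_not_mem_cols hi, hv.apply_eq_zero_of_not_mem_cols hi]

theorem apply_below {i j : ℤ} (hv : IsHarmonic m n v) (h : InGrid m n i j) :
    v i (j - 1) = v (i - 1) j + v (i + 1) j + v i (j + 1) := by
  have := hv.2 i j h
  rw [add_right_comm, CharTwo.add_eq_zero] at this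
  exact this.symm

theorem apply_above {i j : ℤ} (hv : IsHarmonic m n v) (h : InGrid m n i j) :
    v i (j + 1) = v (i - 1) j + v (i + 1) j + v i (j - 1) :=
  (CharTwo.add_eq_zero.mp (hv.2 i j h)).symm

theorem apply_pred_eq_apply_succ_of_row_eq_zero (hv : IsHarmonic m n v) {c : ℤ}
    (hc₀ : 1 ≤ c) (hc₁ : c + 1 ≤ n - 1) (hz : ∀ i, v i c = 0) (i : ℤ) :
    v i (c - 1) = v i (c + 1) :=
  hv.rows_eq_of_eqOn_cols (fun i hi₀ hi₁ => by
    rw [hv.apply_below ⟨hi₀, hi₁, by omega, by omega⟩, hz, hz, zero_add, zero_add]) i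

theorem reflect_rows_add_two (hv : IsHarmonic m n v) {c j : ℤ} (hj : 0 ≤ j)
    (hlo : j + 2 ≤ c) (hhi : c + (j + 2) ≤ n - 1)
    (h₀ : ∀ i, v i (c - j) = v i (c + j))
    (h₁ : ∀ i, v i (c - (j + 1)) = v i (c + (j + 1))) (i : ℤ) :
    v i (c - (j + 2)) = v i (c + (j + 2)) := by
  refine hv.rows_eq_of_eqOn_cols (fun i hi₀ hi₁ => ?_) i
  have below := hv.apply_below (i := i) (j := c - (j + 1)) ⟨hi₀, hi₁, by omega, by omega⟩
  have above := hv.apply_above (i := i) (j := c + (j + 1)) ⟨hi₀, hi₁, by omega, by omega⟩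
  rw [show c - (j + 1) - 1 = c - (j + 2) by ring, show c - (j + 1) + 1 = c - j by ring]
    at below
  rw [show c + (j + 1) + 1 = c + (j + 2) by ring, show c + (j + 1) - 1 = c + j by ring]
    at above
  rw [below, above, h₀, h₁, h₁]

theorem reflect_across_zero_row (hv : IsHarmonic m n v) {c : ℤ} (hz : ∀ i, v i c = 0) :
    ∀ k : ℕ, (k : ℤ) ≤ c → c + k ≤ n - 1 → ∀ i, v i (c - k) = v i (c + k) := by
  refine Nat.twoStepInduction (fun _ _ _ => rfl) ?_ fun k h₀ h₁ hlo hhi => ?_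
  · intro hlo hhi
    push_cast at hlo hhi ⊢
    exact hv.apply_pred_eq_apply_succ_of_row_eq_zero hlo hhi hz
  · push_cast at h₀ h₁ hlo hhi ⊢
    exact hv.reflect_rows_add_two k.cast_nonneg hlo hhi (h₀ (by omega) (by omega))
      (h₁ (by omega) (by omega))

end IsHarmonic

theorem reflection_zero_row_general (m n : ℤ)
    (v : ℤ → ℤ → ZMod 2) (hv : IsHarmonic m n v)
    (n₀ : ℤ)
    (hz : ∀ i : ℤ, 0 ≤ i → i ≤ m - 1 → v i n₀ = 0) :
    ∀ j : ℤ, 0 ≤ j → ∀ i : ℤ, InGrid m n i (n₀ - j) → InGrid m n i (n₀ + j) →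
      v i (n₀ - j) = v i (n₀ + j) := by
  intro j hj i hlo hhi
  have hz_row : ∀ i, v i n₀ = 0 := fun i => by
    by_cases hi : 0 ≤ i ∧ i ≤ m - 1
    · exact hz i hi.1 hi.2
    · exact hv.apply_eq_zero_of_not_mem_cols hi n₀
  lift j to ℕ using hj
  exact hv.reflect_across_zero_row hz_row j (by linarith [hlo.2.2.1]) hhi.2.2.2 i

/-- reflection across a zero row. -/
theorem reflection_zero_row (m n : ℤ) (hm : 2 ≤ m) (hn : 2 ≤ n)
    (v : ℤ → ℤ → ZMod 2) (hv : IsHarmonic m n v)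
    (n₀ : ℤ) (hn₀ : 0 ≤ n₀ ∧ n₀ ≤ n - 1)
    (hz : ∀ i : ℤ, 0 ≤ i → i ≤ m - 1 → v i n₀ = 0) :
    ∀ j : ℤ, 0 ≤ j → ∀ i : ℤ, InGrid m n i (n₀ - j) → InGrid m n i (n₀ + j) →
      v i (n₀ - j) = v i (n₀ + j) :=
  reflection_zero_row_general m n v hv n₀ hz
end

section
/- (Theorem 3(i).) Let m, n ≥ 2 be integers, c = gcd(m+1, n+1) − 1, and let v be a harmonic function on the m×n rectangular grid. Then v vanishes on the grid 𝒢: for every point (i,j) of the grid with i ≡ −1 (mod c+1) or j ≡ −1 (mod c+1), one has v(i,j) = 0. -/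
/-- The triangle wave of period `2 * a` that is the identity on `[-1, a - 1]` and is symmetric
about `-1` and `a - 1`. -/
def reflectIndex (a i : ℤ) : ℤ :=
  (if (i + 1) % (2 * a) ≤ a then (i + 1) % (2 * a) else 2 * a - (i + 1) % (2 * a)) - 1

lemma reflectIndex_add_two_mul (a i k : ℤ) :
    reflectIndex a (i + 2 * a * k) = reflectIndex a i := by
  unfold reflectIndex
  rw [show i + 2 * a * k + 1 = i + 1 + 2 * a * k by ring, Int.add_mul_emod_self_left]

lemma reflectIndex_of_mem_period {a i : ℤ} (ha : 0 < a) (h₀ : -1 ≤ i)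
    (h₁ : i ≤ 2 * a - 1) :
    reflectIndex a i = if i ≤ a - 1 then i else 2 * a - 2 - i := by
  rcases h₁.lt_or_eq with h₁ | rfl
  · unfold reflectIndex
    rw [Int.emod_eq_of_lt (by omega) (by omega)]
    split_ifs <;> omega
  · rw [show 2 * a - 1 = -1 + 2 * a * 1 by ring, reflectIndex_add_two_mul]
    unfold reflectIndex
    rw [neg_add_cancel, Int.zero_emod]
    split_ifs <;> omega

lemma reflectIndex_of_mem {a i : ℤ} (ha : 0 < a) (h₀ : -1 ≤ i) (h₁ : i ≤ a - 1) :
    reflectIndex a i = i := by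
  rw [reflectIndex_of_mem_period ha h₀ (by omega), if_pos h₁]

lemma exists_eq_add_two_mul {a : ℤ} (ha : 0 < a) (i : ℤ) :
    ∃ i₀ k, i = i₀ + 2 * a * k ∧ -1 ≤ i₀ ∧ i₀ ≤ 2 * a - 2 :=
  ⟨(i + 1) % (2 * a) - 1, (i + 1) / (2 * a), by linarith [Int.emod_add_mul_ediv (i + 1) (2 * a)],
    by linarith [Int.emod_nonneg (i + 1) (show 2 * a ≠ 0 by omega)],
    by linarith [Int.emod_lt_of_pos (i + 1) (show 0 < 2 * a by omega)]⟩

lemma reflectIndex_mem {a : ℤ} (ha : 0 < a) (i : ℤ) :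
    -1 ≤ reflectIndex a i ∧ reflectIndex a i ≤ a - 1 := by
  obtain ⟨i₀, k, rfl, h₀, h₁⟩ := exists_eq_add_two_mul ha i
  rw [reflectIndex_add_two_mul, reflectIndex_of_mem_period ha h₀ (by omega)]
  split_ifs <;> omega

lemma reflectIndex_neighbors {a : ℤ} (ha : 0 < a) (i : ℤ) :
    (reflectIndex a (i - 1) = reflectIndex a (i + 1) ∧
      (reflectIndex a i = -1 ∨ reflectIndex a i = a - 1)) ∨
    (0 ≤ reflectIndex a i ∧ reflectIndex a i ≤ a - 2 ∧
      ((reflectIndex a (i - 1) = reflectIndex a i - 1 ∧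
          reflectIndex a (i + 1) = reflectIndex a i + 1) ∨
        (reflectIndex a (i - 1) = reflectIndex a i + 1 ∧
          reflectIndex a (i + 1) = reflectIndex a i - 1))) := by
  obtain ⟨i₀, k, rfl, h₀, h₁⟩ := exists_eq_add_two_mul ha i
  rw [show i₀ + 2 * a * k - 1 = i₀ - 1 + 2 * a * k by ring,
    show i₀ + 2 * a * k + 1 = i₀ + 1 + 2 * a * k by ring,
    reflectIndex_add_two_mul, reflectIndex_add_two_mul, reflectIndex_add_two_mul,
    reflectIndex_of_mem_period ha h₀ (by omega),
    reflectIndex_of_mem_period ha (i := i₀ + 1) (by omega) (by omega)]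
  rcases h₀.lt_or_eq with h₀ | rfl
  · rw [reflectIndex_of_mem_period ha (by omega) (by omega)]
    split_ifs <;> omega
  · rw [show (-1 : ℤ) - 1 = 2 * a - 2 + 2 * a * (-1) by ring, reflectIndex_add_two_mul,
      reflectIndex_of_mem_period ha (by omega) (by omega)]
    split_ifs <;> omega

def IsAntidiagInvariant {α : Type*} (W : ℤ → ℤ → α) : Prop :=
  ∀ i j, W (i + 1) j = W i (j + 1)

namespace IsAntidiagInvariant

variable {α : Type*} {W W' : ℤ → ℤ → α}

lemma eq_zero_add (hW : IsAntidiagInvariant W) (i j : ℤ) : W i j = W 0 (i + j) := by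
  induction i using Int.induction_on generalizing j with
  | zero => simp
  | succ i ih => rw [hW, ih, add_right_comm, add_assoc]
  | pred i ih =>
    have h := hW (-i - 1) (j - 1)
    rw [sub_add_cancel, sub_add_cancel] at h
    rw [← h, ih]
    ring_nf

lemma eq_of_add_eq (hW : IsAntidiagInvariant W) {i j i' j' : ℤ} (h : i + j = i' + j') :
    W i j = W i' j' := by
  rw [hW.eq_zero_add, hW.eq_zero_add i', h]

lemma add [Add α] (hW : IsAntidiagInvariant W) (hW' : IsAntidiagInvariant W') :
    IsAntidiagInvariant fun i j => W i j + W' i j := fun i j => by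
  simp only [hW i j, hW' i j]

lemma comp_add_diag (hW : IsAntidiagInvariant W) (s : ℤ) :
    IsAntidiagInvariant fun i j => W (i + s) (j + s) := fun i j => by
  simp only [add_right_comm _ 1 s]
  exact hW _ _

end IsAntidiagInvariant

lemma Function.Periodic.gcd_zsmul {α β : Type*} [AddGroup α] {f : α → β} {c : α} {a b : ℤ}
    (ha : Function.Periodic f (a • c)) (hb : Function.Periodic f (b • c)) :
    Function.Periodic f ((Int.gcd a b : ℤ) • c) := by
  rw [Int.gcd_eq_gcd_ab, add_zsmul, mul_zsmul', mul_zsmul']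
  exact (ha.zsmul _).add_period (hb.zsmul _)

section Plane

variable {R : Type*} [CommRing R] [CharP R 2] {V : ℤ → ℤ → R}

def IsPlaneHarmonic (V : ℤ → ℤ → R) : Prop :=
  ∀ i j, V (i - 1) j + V (i + 1) j + V i (j - 1) + V i (j + 1) = 0

lemma IsPlaneHarmonic.isAntidiagInvariant_add_shift (hV : IsPlaneHarmonic V)
    (t : ℤ) : IsAntidiagInvariant fun i j => V i j + V (i + t) (j + t) := by
  have one : IsAntidiagInvariant fun i j => V i j + V (i + 1) (j + 1) := fun i j => by
    rw [← CharTwo.add_eq_zero]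
    convert hV (i + 1) (j + 1) using 1
    simp only [add_sub_cancel_right]
    ring
  induction t using Int.induction_on with
  | zero => intro i j; simp [CharTwo.add_self_eq_zero]
  | succ t ih =>
    convert ih.add (one.comp_add_diag t) using 1
    funext i j
    ring_nf
    simp [CharTwo.two_eq_zero]
  | pred t ih =>
    convert ih.add (one.comp_add_diag (-t - 1)) using 1
    funext i j
    ring_nf
    simp [CharTwo.two_eq_zero]

lemma IsPlaneHarmonic.periodic_of_zero_on_fst (hV : IsPlaneHarmonic V) {a t : ℤ}
    (h₀ : ∀ j, V a j = 0) (h₁ : ∀ j, V (a + t) j = 0) :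
    Function.Periodic (Function.uncurry V) (t • (1, 1)) := by
  rintro ⟨i, j⟩
  have h := (hV.isAntidiagInvariant_add_shift t).eq_of_add_eq
    (show i + j = a + (i + j - a) by ring)
  simp only [h₀, h₁, zero_add] at h
  simpa using (CharTwo.add_eq_zero.mp h).symm

lemma IsPlaneHarmonic.periodic_of_zero_on_snd (hV : IsPlaneHarmonic V) {b t : ℤ}
    (h₀ : ∀ i, V i b = 0) (h₁ : ∀ i, V i (b + t) = 0) :
    Function.Periodic (Function.uncurry V) (t • (1, 1)) := by
  rintro ⟨i, j⟩
  have h := (hV.isAntidiagInvariant_add_shift t).eq_of_add_eq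
    (show i + j = (i + j - b) + b by ring)
  simp only [h₀, h₁, zero_add] at h
  simpa using (CharTwo.add_eq_zero.mp h).symm

end Plane

def reflectExtension {α : Type*} (m n : ℤ) (v : ℤ → ℤ → α) (i j : ℤ) : α :=
  v (reflectIndex (m + 1) i) (reflectIndex (n + 1) j)

lemma reflectExtension_of_inGrid {α : Type*} {m n i j : ℤ} {v : ℤ → ℤ → α}
    (h : InGrid m n i j) :
    reflectExtension m n v i j = v i j := by
  obtain ⟨h₁, h₂, h₃, h₄⟩ := h
  rw [reflectExtension, reflectIndex_of_mem (by omega) (by omega) (by omega),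
    reflectIndex_of_mem (by omega) (by omega) (by omega)]

section Extension

variable {m n : ℤ} {v : ℤ → ℤ → ZMod 2}

lemma IsHarmonic.reflectExtension_eq_zero_of_fst (hv : IsHarmonic m n v) (hm : 0 ≤ m) {i : ℤ}
    (hi : i = -1 ∨ i = m) (j : ℤ) : reflectExtension m n v i j = 0 := by
  rw [reflectExtension, reflectIndex_of_mem (by omega) (by omega) (by omega)]
  exact hv.1 _ _ (by unfold InGrid; omega)

lemma IsHarmonic.reflectExtension_eq_zero_of_snd (hv : IsHarmonic m n v) (hn : 0 ≤ n) {j : ℤ}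
    (hj : j = -1 ∨ j = n) (i : ℤ) : reflectExtension m n v i j = 0 := by
  rw [reflectExtension, reflectIndex_of_mem (a := n + 1) (by omega) (by omega) (by omega)]
  exact hv.1 _ _ (by unfold InGrid; omega)

lemma IsHarmonic.isPlaneHarmonic_reflectExtension (hv : IsHarmonic m n v) (hm : 0 ≤ m)
    (hn : 0 ≤ n) : IsPlaneHarmonic (reflectExtension m n v) := by
  intro i j
  simp only [reflectExtension]
  set x := reflectIndex (m + 1) i
  set y := reflectIndex (n + 1) j
  have hxi := reflectIndex_mem (a := m + 1) (by omega)
  have hyj := reflectIndex_mem (a := n + 1) (by omega)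
  have hv₀ : ∀ i' j', (i' = -1 ∨ i' = m ∨ j' = -1 ∨ j' = n) → v i' j' = 0 :=
    fun i' j' h => hv.1 _ _ (by unfold InGrid; omega)
  rcases reflectIndex_neighbors (a := m + 1) (by omega) i with ⟨hi, hx⟩ | ⟨hx₀, hx₁, hi⟩
  · rw [hi, CharTwo.add_self_eq_zero, hv₀ x _ (by omega), hv₀ x _ (by omega), zero_add,
      add_zero]
  rcases reflectIndex_neighbors (a := n + 1) (by omega) j with ⟨hj, hy⟩ | ⟨hy₀, hy₁, hj⟩
  · rw [hj, CharTwo.add_cancel_right, hv₀ _ y (by omega), hv₀ _ y (by omega), add_zero]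
  have pair_i : v (reflectIndex (m + 1) (i - 1)) y + v (reflectIndex (m + 1) (i + 1)) y =
      v (x - 1) y + v (x + 1) y := by
    rcases hi with ⟨h₁, h₂⟩ | ⟨h₁, h₂⟩ <;> rw [h₁, h₂]
    exact add_comm _ _
  have pair_j : v x (reflectIndex (n + 1) (j - 1)) + v x (reflectIndex (n + 1) (j + 1)) =
      v x (y - 1) + v x (y + 1) := by
    rcases hj with ⟨h₁, h₂⟩ | ⟨h₁, h₂⟩ <;> rw [h₁, h₂]
    exact add_comm _ _
  rw [pair_i, add_assoc, pair_j, ← add_assoc]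
  exact hv.2 x y (by unfold InGrid; omega)

lemma IsHarmonic.periodic_reflectExtension (hv : IsHarmonic m n v) (hm : 0 ≤ m) (hn : 0 ≤ n) :
    Function.Periodic (Function.uncurry (reflectExtension m n v))
      ((Int.gcd (m + 1) (n + 1) : ℤ) • (1, 1)) := by
  have hV := hv.isPlaneHarmonic_reflectExtension hm hn
  refine Function.Periodic.gcd_zsmul
    (hV.periodic_of_zero_on_fst (a := -1) (hv.reflectExtension_eq_zero_of_fst hm ?_)
      (hv.reflectExtension_eq_zero_of_fst hm ?_))
    (hV.periodic_of_zero_on_snd (b := -1) (hv.reflectExtension_eq_zero_of_snd hn ?_)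
      (hv.reflectExtension_eq_zero_of_snd hn ?_)) <;> omega

end Extension

/-- Theorem 3(i): harmonic functions vanish on the grid 𝒢,
i.e. at every grid point with i ≡ −1 or j ≡ −1 (mod c+1). -/
theorem vanishes_on_grid_lines (m n : ℤ) (hm : 2 ≤ m) (hn : 2 ≤ n)
    (c : ℕ) (hc : c = Int.gcd (m + 1) (n + 1) - 1)
    (v : ℤ → ℤ → ZMod 2) (hv : IsHarmonic m n v) :
    ∀ i j : ℤ, InGrid m n i j →
      (((c : ℤ) + 1) ∣ (i + 1) ∨ ((c : ℤ) + 1) ∣ (j + 1)) → v i j = 0 := by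
  intro i j hij hdvd
  have hgcd : (c : ℤ) + 1 = Int.gcd (m + 1) (n + 1) := by
    have := Int.gcd_pos_of_ne_zero_left (n + 1) (show m + 1 ≠ 0 by omega)
    omega
  have hshift : ∀ k : ℤ, reflectExtension m n v (i - k * (c + 1)) (j - k * (c + 1)) =
      reflectExtension m n v i j := fun k => by
    simpa only [hgcd, sub_eq_add_neg, Prod.smul_mk, Int.zsmul_eq_mul, mul_one, neg_smul,
      Prod.neg_mk, Prod.mk_add_mk, Function.uncurry_apply_pair]
      using (hv.periodic_reflectExtension (by omega) (by omega)).zsmul (-k) (i, j)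
  rw [← reflectExtension_of_inGrid (v := v) hij]
  rcases hdvd with ⟨k, hk⟩ | ⟨k, hk⟩
  · rw [← hshift k, show i - k * (c + 1) = -1 by linear_combination hk]
    exact hv.reflectExtension_eq_zero_of_fst (by omega) (.inl rfl) _
  · rw [← hshift k, show j - k * (c + 1) = -1 by linear_combination hk]
    exact hv.reflectExtension_eq_zero_of_snd (by omega) (.inl rfl) _
end

section
/- (Theorem 3(iii), mirror symmetry across the grid.) Let m, n ≥ 2 be integers, c = gcd(m+1, n+1) − 1, and let v be a harmonic function on the m×n rectangular grid. Then for every positive integer k with k(c+1) − 1 ≤ m−1, every i ≥ 0 and every 0 ≤ j ≤ n−1, if both (k(c+1)−1−i, j) and (k(c+1)−1+i, j) lie in the grid then v(k(c+1)−1−i, j) = v(k(c+1)−1+i, j); and symmetrically for horizontal grid lines: for every positive integer k with k(c+1) − 1 ≤ n−1, if both (i, k(c+1)−1−j) and (i, k(c+1)−1+j) lie in the grid then v(i, k(c+1)−1−j) = v(i, k(c+1)−1+j). -/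
/-! Over `ZMod 2` the harmonic equation reads `v (x + 1) = M (v x) - v (x - 1)` for the columns
`v x : ℤ → ZMod 2`, where `M` is the adjacency operator of the path `{0, …, n - 1}`. Hence
`v x = S x (M) (v 0)` for the Vieta–Fibonacci polynomials `S`. The column `v m` lies outside the
grid, so `S m (M)` kills `v 0`, and so does `S n (M)`: the indicator `e₀` of `0` is a cyclic
vector of `M` with `S t (M) e₀ = eₜ`, and `eₙ = 0`. By the addition formula for `S`, the `a` with
`S (a - 1) (M) (v 0) = 0` form a subgroup of `ℤ`, so `S a (M)` kills `v 0` whenever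
`gcd (m + 1) (n + 1) ∣ a + 1`, and the product formula `S a * C i = S (a + i) + S (a - i)` turns
this into `v (a + i) = v (a - i)` in characteristic two. -/

open Polynomial

namespace Polynomial.Chebyshev

variable (R : Type*) [CommRing R]

theorem S_add (m k : ℤ) : S R (m + k) = S R m * S R k - S R (m - 1) * S R (k - 1) := by
  induction k using Polynomial.Chebyshev.induct with
  | zero => simp
  | one => simp [S_add_one, mul_comm]
  | add_two k ih1 ih2 =>
    have h₁ := S_add_two R (m + k)
    have h₂ := S_add_two R k
    have h₃ := S_add_one R k
    linear_combination (norm := ring_nf)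
      -S R m * h₂ + S R (m - 1) * h₃ + h₁ + (X : R[X]) * ih1 - ih2
  | neg_add_one k ih1 ih2 =>
    have h₁ := S_sub_one R (m - k)
    have h₂ := S_sub_one R (-k)
    have h₃ := S_sub_two R (-k)
    linear_combination (norm := ring_nf)
      -S R m * h₂ + S R (m - 1) * h₃ + h₁ + (X : R[X]) * ih1 - ih2

theorem S_mul_C (m k : ℤ) : S R m * C R k = S R (m + k) + S R (m - k) := by
  rw [C_eq_S_sub_X_mul_S, S_add, sub_eq_add_neg m k, S_add, S_neg, S_neg_sub_one]
  linear_combination (norm := ring_nf) S R m * S_sub_two R k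

variable {R}

def sSubOneMemSubgroup (I : Ideal R[X]) : AddSubgroup ℤ where
  carrier := {a | S R (a - 1) ∈ I}
  zero_mem' := by simp
  add_mem' {a b} (ha : S R (a - 1) ∈ I) (hb : S R (b - 1) ∈ I) := by
    show S R (a + b - 1) ∈ I
    rw [show a + b - 1 = (a - 1) + b by ring, S_add]
    exact I.sub_mem (I.mul_mem_right _ ha) (I.mul_mem_left _ hb)
  neg_mem' {a} ha := by simpa [S_neg_sub_one] using ha

theorem S_sub_one_mem_of_gcd_dvd {I : Ideal R[X]} {a b c : ℤ} (ha : S R (a - 1) ∈ I)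
    (hb : S R (b - 1) ∈ I) (hc : (Int.gcd a b : ℤ) ∣ c) : S R (c - 1) ∈ I := by
  obtain ⟨k, rfl⟩ := hc
  have hbezout : (Int.gcd a b : ℤ) * k = (a.gcdA b * k) • a + (a.gcdB b * k) • b := by
    rw [Int.gcd_eq_gcd_ab, smul_eq_mul, smul_eq_mul]
    ring
  rw [hbezout]
  exact (sSubOneMemSubgroup I).add_mem (zsmul_mem (show a ∈ sSubOneMemSubgroup I from ha) _)
    (zsmul_mem (show b ∈ sSubOneMemSubgroup I from hb) _)

end Polynomial.Chebyshev

open Polynomial.Chebyshev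

theorem Module.End.eq_aeval_S_of_recurrence {R V : Type*} [CommRing R] [AddCommGroup V]
    [Module R V] (T : Module.End R V) {u : ℤ → V} {N : ℤ} (hu : u (-1) = 0)
    (hrec : ∀ t, 0 ≤ t → t < N → u (t + 1) = T (u t) - u (t - 1)) {t : ℤ} (ht₀ : 0 ≤ t)
    (htN : t ≤ N) : u t = aeval T (S R t) (u 0) := by
  suffices h : u t = aeval T (S R t) (u 0) ∧ u (t - 1) = aeval T (S R (t - 1)) (u 0) from h.1
  induction t, ht₀ using Int.leInduction with
  | base => simp [hu]
  | succ t ht₀ ih =>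
    obtain ⟨ih₁, ih₀⟩ := ih (by omega)
    refine ⟨?_, by simpa using ih₁⟩
    rw [hrec t ht₀ (by omega), ih₁, ih₀, S_add_one, map_sub, map_mul, aeval_X]
    rfl

noncomputable def pathAdj (n : ℤ) : Module.End (ZMod 2) (ℤ → ZMod 2) where
  toFun f j := if 0 ≤ j ∧ j < n then f (j - 1) + f (j + 1) else 0
  map_add' f g := by
    funext j
    simp only [Pi.add_apply]
    split_ifs <;> ring
  map_smul' c f := by
    funext j
    simp only [Pi.smul_apply, smul_eq_mul, RingHom.id_apply]
    split_ifs <;> ring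

theorem pathAdj_apply (n : ℤ) (f : ℤ → ZMod 2) (j : ℤ) :
    pathAdj n f j = if 0 ≤ j ∧ j < n then f (j - 1) + f (j + 1) else 0 := rfl

theorem aeval_pathAdj_S_self_apply_eq_zero (n : ℤ) {f : ℤ → ZMod 2}
    (hf : Function.support f ⊆ Set.Ico 0 n) : aeval (pathAdj n) (S (ZMod 2) n) f = 0 := by
  let e : ℤ → ℤ → ZMod 2 := fun t j => if j = t ∧ 0 ≤ j ∧ j < n then 1 else 0
  have he : ∀ t, 0 ≤ t → t ≤ n → e t = aeval (pathAdj n) (S (ZMod 2) t) (e 0) := by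
    intro t ht₀ htn
    refine Module.End.eq_aeval_S_of_recurrence _ ?_ ?_ ht₀ htn
    · funext j
      simp only [e, Pi.zero_apply, ite_eq_right_iff]
      omega
    · intro t ht₀ htn
      funext j
      simp only [e, pathAdj_apply, Pi.sub_apply, CharTwo.sub_eq_add]
      split_ifs <;> first | omega | decide
  have hen : e n = 0 := by
    funext j
    simp only [e, Pi.zero_apply, ite_eq_right_iff]
    omega
  have hsum : f = ∑ t ∈ Finset.Ico 0 n, f t • e t := by
    funext j
    by_cases hj : 0 ≤ j ∧ j < n
    · simp [e, hj]
    · simp [e, hj, Function.notMem_support.mp fun h => hj (hf h)]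
  rw [hsum, map_sum]
  refine Finset.sum_eq_zero fun t ht => ?_
  obtain ⟨ht₀, htn⟩ := Finset.mem_Ico.mp ht
  rw [map_smul, he t ht₀ htn.le, ← Module.End.mul_apply, ← map_mul, mul_comm, map_mul,
    Module.End.mul_apply, ← he n (by omega) le_rfl, hen, map_zero, smul_zero]

theorem InGrid.transpose {m n i j : ℤ} (h : InGrid m n i j) : InGrid n m j i := by
  unfold InGrid at *
  omega

namespace IsHarmonic

variable {m n : ℤ} {v : ℤ → ℤ → ZMod 2}

theorem transpose (hv : IsHarmonic m n v) : IsHarmonic n m (fun i j => v j i) :=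
  ⟨fun i j h => hv.1 j i fun h' => h h'.transpose,
    fun i j h => by linear_combination hv.2 j i h.transpose⟩

theorem apply_add_one (hv : IsHarmonic m n v) {x : ℤ} (hx₀ : 0 ≤ x) (hxm : x < m) :
    v (x + 1) = pathAdj n (v x) - v (x - 1) := by
  funext j
  rw [Pi.sub_apply, pathAdj_apply, CharTwo.sub_eq_add]
  split_ifs with hj
  · linear_combination hv.2 x j (by unfold InGrid; omega)
      - (v x (j - 1) + v x (j + 1) + v (x - 1) j) * CharTwo.two_eq_zero (R := ZMod 2)
  · rw [hv.1 _ _ (by unfold InGrid; omega), hv.1 _ _ (by unfold InGrid; omega), add_zero]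

theorem eq_aeval_pathAdj_S (hv : IsHarmonic m n v) {x : ℤ} (hx₀ : 0 ≤ x) (hxm : x ≤ m) :
    v x = aeval (pathAdj n) (S (ZMod 2) x) (v 0) :=
  Module.End.eq_aeval_S_of_recurrence _ (funext fun j => hv.1 _ _ (by unfold InGrid; omega))
    (fun _ ht₀ htm => hv.apply_add_one ht₀ htm) hx₀ hxm

theorem aeval_pathAdj_S_apply_eq_zero (hv : IsHarmonic m n v) (hm : 0 ≤ m) {a : ℤ}
    (ha : (Int.gcd (m + 1) (n + 1) : ℤ) ∣ a + 1) :
    aeval (pathAdj n) (S (ZMod 2) a) (v 0) = 0 := by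
  have hmem : S (ZMod 2) a ∈ Ideal.span {S (ZMod 2) m, S (ZMod 2) n} := by
    simpa using S_sub_one_mem_of_gcd_dvd (I := Ideal.span {S (ZMod 2) m, S (ZMod 2) n})
      (a := m + 1) (b := n + 1) (Ideal.subset_span (by simp)) (Ideal.subset_span (by simp)) ha
  obtain ⟨α, β, hαβ⟩ := Ideal.mem_span_pair.mp hmem
  have hSm : aeval (pathAdj n) (S (ZMod 2) m) (v 0) = 0 := by
    rw [← hv.eq_aeval_pathAdj_S hm le_rfl]
    exact funext fun j => hv.1 _ _ (by unfold InGrid; omega)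
  have hSn : aeval (pathAdj n) (S (ZMod 2) n) (v 0) = 0 :=
    aeval_pathAdj_S_self_apply_eq_zero n fun j hj => by
      have := mt (hv.1 0 j) hj
      unfold InGrid at this
      constructor <;> omega
  rw [← hαβ, map_add, map_mul, map_mul, LinearMap.add_apply, Module.End.mul_apply,
    Module.End.mul_apply, hSm, hSn, map_zero, map_zero, add_zero]

theorem apply_sub_eq_apply_add (hv : IsHarmonic m n v) {a i j : ℤ}
    (ha : (Int.gcd (m + 1) (n + 1) : ℤ) ∣ a + 1) (h₁ : InGrid m n (a - i) j)
    (h₂ : InGrid m n (a + i) j) : v (a - i) j = v (a + i) j := by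
  unfold InGrid at h₁ h₂
  have hsum : v (a + i) + v (a - i) = 0 := by
    rw [hv.eq_aeval_pathAdj_S (x := a + i) (by omega) (by omega),
      hv.eq_aeval_pathAdj_S (x := a - i) (by omega) (by omega), ← LinearMap.add_apply, ← map_add,
      ← S_mul_C, mul_comm, map_mul, Module.End.mul_apply,
      hv.aeval_pathAdj_S_apply_eq_zero (by omega) ha, map_zero]
  exact (CharTwo.add_eq_zero.mp (congrFun hsum j)).symm

end IsHarmonic

theorem mirror_symmetry_grid_general (m n : ℤ)
    (c : ℕ) (hc : c = Int.gcd (m + 1) (n + 1) - 1)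
    (v : ℤ → ℤ → ZMod 2) (hv : IsHarmonic m n v) :
    (∀ k : ℕ, 0 < k → (k : ℤ) * ((c : ℤ) + 1) - 1 ≤ m - 1 →
      ∀ i : ℤ, 0 ≤ i → ∀ j : ℤ, 0 ≤ j → j ≤ n - 1 →
        InGrid m n ((k : ℤ) * ((c : ℤ) + 1) - 1 - i) j →
        InGrid m n ((k : ℤ) * ((c : ℤ) + 1) - 1 + i) j →
        v ((k : ℤ) * ((c : ℤ) + 1) - 1 - i) j =
          v ((k : ℤ) * ((c : ℤ) + 1) - 1 + i) j) ∧
    (∀ k : ℕ, 0 < k → (k : ℤ) * ((c : ℤ) + 1) - 1 ≤ n - 1 →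
      ∀ j : ℤ, 0 ≤ j → ∀ i : ℤ, 0 ≤ i → i ≤ m - 1 →
        InGrid m n i ((k : ℤ) * ((c : ℤ) + 1) - 1 - j) →
        InGrid m n i ((k : ℤ) * ((c : ℤ) + 1) - 1 + j) →
        v i ((k : ℤ) * ((c : ℤ) + 1) - 1 - j) =
          v i ((k : ℤ) * ((c : ℤ) + 1) - 1 + j)) := by
  have hdvd : ∀ {x y : ℤ} (k : ℕ), InGrid m n x y →
      (Int.gcd (m + 1) (n + 1) : ℤ) ∣ (k : ℤ) * ((c : ℤ) + 1) - 1 + 1 := fun k h => by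
    have := Int.gcd_pos_of_ne_zero_left (a := m + 1) (n + 1) (by unfold InGrid at h; omega)
    rw [sub_add_cancel, show (c : ℤ) + 1 = Int.gcd (m + 1) (n + 1) by omega]
    exact dvd_mul_left _ _
  refine ⟨fun k _ _ i _ j _ _ h₁ h₂ => hv.apply_sub_eq_apply_add (hdvd k h₁) h₁ h₂,
    fun k _ _ j _ i _ _ h₁ h₂ => hv.transpose.apply_sub_eq_apply_add ?_ h₁.transpose h₂.transpose⟩
  rw [Int.gcd_comm]
  exact hdvd k h₁

/-- Theorem 3(iii): mirror symmetry across the grid lines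
x = k(c+1)−1 and y = k(c+1)−1. -/
theorem mirror_symmetry_grid (m n : ℤ) (hm : 2 ≤ m) (hn : 2 ≤ n)
    (c : ℕ) (hc : c = Int.gcd (m + 1) (n + 1) - 1)
    (v : ℤ → ℤ → ZMod 2) (hv : IsHarmonic m n v) :
    (∀ k : ℕ, 0 < k → (k : ℤ) * ((c : ℤ) + 1) - 1 ≤ m - 1 →
      ∀ i : ℤ, 0 ≤ i → ∀ j : ℤ, 0 ≤ j → j ≤ n - 1 →
        InGrid m n ((k : ℤ) * ((c : ℤ) + 1) - 1 - i) j →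
        InGrid m n ((k : ℤ) * ((c : ℤ) + 1) - 1 + i) j →
        v ((k : ℤ) * ((c : ℤ) + 1) - 1 - i) j =
          v ((k : ℤ) * ((c : ℤ) + 1) - 1 + i) j) ∧
    (∀ k : ℕ, 0 < k → (k : ℤ) * ((c : ℤ) + 1) - 1 ≤ n - 1 →
      ∀ j : ℤ, 0 ≤ j → ∀ i : ℤ, 0 ≤ i → i ≤ m - 1 →
        InGrid m n i ((k : ℤ) * ((c : ℤ) + 1) - 1 - j) →
        InGrid m n i ((k : ℤ) * ((c : ℤ) + 1) - 1 + j) →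
        v i ((k : ℤ) * ((c : ℤ) + 1) - 1 - j) =
          v i ((k : ℤ) * ((c : ℤ) + 1) - 1 + j)) :=
  mirror_symmetry_grid_general m n c hc v hv
end

section
/- (Theorem 3(iv) for ker BW.) Let m, n ≥ 2 be integers and c = gcd(m+1, n+1) − 1 with c ≥ 1. Then the 𝔽₂-dimension of the polarized kernel ker BW of the m×n rectangular grid equals the 𝔽₂-dimension of the polarized kernel of the c×c rectangular grid. -/
/-!
Reflecting a harmonic `v` in the lines `i = -1`, `i = m`, `j = -1`, `j = n`, on which it vanishes,
gives a function on `ℤ²` that is harmonic everywhere (over `𝔽₂` odd and even reflections agree).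
If `v` vanishes at white points, harmonicity at a white point says that in the coordinates
`(a + b, a - b)` of the black sublattice every unit square has zero alternating sum, so the
extension separates as `φ a + φ (-1 - b)`, where `φ` is its restriction to the diagonal. The
reflections make `φ` both `(m + 1)`- and `(n + 1)`-periodic, hence `gcd (m + 1) (n + 1)`-periodic,
symmetric about `-1` and zero there; conversely every such `φ` defines an element of `ker BW`.
So `ker BW` depends only on `gcd (m + 1) (n + 1)`, which is `c + 1` for both grids.
-/

open Function

theorem Function.Periodic.gcd_period {α : Type*} {f : ℤ → α} {a b : ℤ} (ha : Periodic f a)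
    (hb : Periodic f b) : Periodic f (Int.gcd a b) := by
  rw [Int.gcd_eq_gcd_ab, mul_comm a, mul_comm b]
  exact (ha.int_mul _).add_period (hb.int_mul _)

theorem Function.Periodic.of_dvd {α : Type*} {f : ℤ → α} {c a : ℤ} (h : Periodic f c)
    (hca : c ∣ a) : Periodic f a := by
  obtain ⟨k, rfl⟩ := hca
  rw [mul_comm]
  exact h.int_mul k

theorem eq_add_sub_of_plaquette {G : Type*} [AddCommGroup G] {f : ℤ → ℤ → G}
    (h : ∀ p q, f p q + f (p + 1) (q + 1) = f (p + 1) q + f p (q + 1)) (a b : ℤ) :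
    f a b = f a 0 + f 0 b - f 0 0 := by
  have hcol : ∀ p, Periodic (fun q => f (p + 1) q - f p q) 1 := fun p q =>
    sub_eq_sub_iff_add_eq_add.mpr (by rw [add_comm]; exact h p q)
  have hrow : Periodic (fun p => f p b - f p 0) 1 := fun p =>
    sub_eq_sub_iff_sub_eq_sub.mpr (by simpa using (hcol p).zsmul b 0)
  have hsep : f a b - f a 0 = f 0 b - f 0 0 := by simpa using hrow.zsmul a 0
  rw [← sub_add_cancel (f a b) (f a 0), hsep]
  abel

/-- Folding of `ℤ` onto `[-1, M - 1]` by the reflections in `-1` and `M - 1`. -/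
def fold (M i : ℤ) : ℤ :=
  if i % (2 * M) < M then i % (2 * M) else 2 * M - 2 - i % (2 * M)

section Fold

variable {M : ℤ}

theorem fold_mem_Icc (hM : 0 < M) (i : ℤ) : fold M i ∈ Set.Icc (-1) (M - 1) := by
  have hD : 0 < 2 * M := by omega
  have h0 := Int.emod_nonneg i hD.ne'
  have h1 := Int.emod_lt_of_pos i hD
  unfold fold
  constructor <;> split_ifs <;> omega

theorem fold_of_mem_Icc (hM : 0 < M) {i : ℤ} (hi : i ∈ Set.Icc (-1) (M - 1)) : fold M i = i := by
  obtain ⟨hi0, hi1⟩ := hi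
  have hD : 0 < 2 * M := by omega
  have hs : i % (2 * M) = if i = -1 then 2 * M - 1 else i := by
    split_ifs with h
    · exact ((Int.ediv_emod_unique (q := -1) hD).mpr ⟨by rw [h]; ring, by omega, by omega⟩).2
    · exact ((Int.ediv_emod_unique (q := 0) hD).mpr ⟨by ring, by omega, by omega⟩).2
  unfold fold
  rw [hs]
  split_ifs <;> omega

theorem fold_eq_add_or_eq_sub (M i : ℤ) :
    (∃ k, fold M i = i + 2 * M * k) ∨ ∃ k, fold M i = -2 - i + 2 * M * k := by
  have hi := Int.emod_add_mul_ediv i (2 * M)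
  unfold fold
  split_ifs
  · exact Or.inl ⟨-(i / (2 * M)), by linear_combination hi⟩
  · exact Or.inr ⟨i / (2 * M) + 1, by linear_combination -hi⟩

theorem apply_fold {α : Type*} {g : ℤ → α} (hper : Periodic g (2 * M))
    (hrefl : ∀ i, g (-2 - i) = g i) (i : ℤ) : g (fold M i) = g i := by
  rcases fold_eq_add_or_eq_sub M i with ⟨k, hk⟩ | ⟨k, hk⟩
  · rw [hk, mul_comm (2 * M), ← smul_eq_mul, hper.zsmul k]
  · rw [hk, mul_comm (2 * M), ← smul_eq_mul, hper.zsmul k, hrefl]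

theorem fold_eq_neg_one_or_of_dvd (hM : 0 < M) {i : ℤ} (h : M ∣ i + 1) :
    fold M i = -1 ∨ fold M i = M - 1 := by
  obtain ⟨h0, h1⟩ := fold_mem_Icc hM i
  have hdvd : M ∣ fold M i + 1 := by
    obtain ⟨c, hc⟩ := h
    rcases fold_eq_add_or_eq_sub M i with ⟨k, hk⟩ | ⟨k, hk⟩
    · exact ⟨c + 2 * k, by linear_combination hk + hc⟩
    · exact ⟨2 * k - c, by linear_combination hk - hc⟩
  rcases (show fold M i + 1 < M ∨ fold M i + 1 = M by omega) with hlt | heq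
  · have := Int.eq_zero_of_dvd_of_nonneg_of_lt (by omega) hlt hdvd
    omega
  · omega

theorem fold_neighbors (hM : 0 < M) (i : ℤ) :
    (fold M (i - 1) = fold M (i + 1) ∧ (fold M i = -1 ∨ fold M i = M - 1)) ∨
    (0 ≤ fold M i ∧ fold M i ≤ M - 2 ∧
      ((fold M (i - 1) = fold M i - 1 ∧ fold M (i + 1) = fold M i + 1) ∨
       (fold M (i - 1) = fold M i + 1 ∧ fold M (i + 1) = fold M i - 1))) := by
  have hD : 0 < 2 * M := by omega
  have hi := Int.emod_add_mul_ediv i (2 * M)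
  have h0 := Int.emod_nonneg i hD.ne'
  have h1 := Int.emod_lt_of_pos i hD
  have hsucc : (i + 1) % (2 * M) = if i % (2 * M) = 2 * M - 1 then 0 else i % (2 * M) + 1 := by
    split_ifs with h
    · exact ((Int.ediv_emod_unique (q := i / (2 * M) + 1) hD).mpr
        ⟨by linear_combination hi - h, le_rfl, hD⟩).2
    · exact ((Int.ediv_emod_unique (q := i / (2 * M)) hD).mpr
        ⟨by linear_combination hi, by omega, by omega⟩).2
  have hpred : (i - 1) % (2 * M) = if i % (2 * M) = 0 then 2 * M - 1 else i % (2 * M) - 1 := by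
    split_ifs with h
    · exact ((Int.ediv_emod_unique (q := i / (2 * M) - 1) hD).mpr
        ⟨by linear_combination hi - h, by omega, by omega⟩).2
    · exact ((Int.ediv_emod_unique (q := i / (2 * M)) hD).mpr
        ⟨by linear_combination hi, by omega, by omega⟩).2
  unfold fold
  rw [hsucc, hpred]
  split_ifs <;> omega

end Fold

-- Over `𝔽₂` the neighbour sum is the discrete Laplacian.
def laplacian (w : ℤ → ℤ → ZMod 2) (i j : ℤ) : ZMod 2 :=
  w (i - 1) j + w (i + 1) j + w i (j - 1) + w i (j + 1)

def foldExt (m n : ℤ) (v : ℤ → ℤ → ZMod 2) (i j : ℤ) : ZMod 2 :=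
  v (fold (m + 1) i) (fold (n + 1) j)

def symmPeriodic (P : ℤ) : Submodule (ZMod 2) (ℤ → ZMod 2) where
  carrier := {φ | Periodic φ P ∧ (∀ t, φ (-2 - t) = φ t) ∧ φ (-1) = 0}
  zero_mem' := ⟨fun _ => rfl, fun _ => rfl, rfl⟩
  add_mem' := by
    rintro φ ψ ⟨hφ, hφs, hφ0⟩ ⟨hψ, hψs, hψ0⟩
    exact ⟨hφ.add hψ, fun t => by simp [hφs t, hψs t], by simp [hφ0, hψ0]⟩
  smul_mem' := by
    rintro c φ ⟨hφ, hφs, hφ0⟩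
    exact ⟨hφ.smul c, fun t => by simp [hφs t], by simp [hφ0]⟩

section FoldExt

variable {m n : ℤ} {v : ℤ → ℤ → ZMod 2}

theorem foldExt_eq_zero (hm : 0 ≤ m) (hn : 0 ≤ n) (hv : ∀ i j, ¬InGrid m n i j → v i j = 0)
    {i j : ℤ} (h : m + 1 ∣ i + 1 ∨ n + 1 ∣ j + 1) : foldExt m n v i j = 0 := by
  apply hv
  unfold InGrid
  rcases h with h | h
  · have := fold_eq_neg_one_or_of_dvd (by omega) h
    omega
  · have := fold_eq_neg_one_or_of_dvd (by omega) h
    omega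

theorem laplacian_foldExt (hm : 0 ≤ m) (hn : 0 ≤ n) (hv : IsHarmonic m n v) (i j : ℤ) :
    laplacian (foldExt m n v) i j = 0 := by
  obtain ⟨hv0, hv1⟩ := hv
  have hbdry : ∀ x y, (x = -1 ∨ x = m ∨ y = -1 ∨ y = n) → v x y = 0 := fun x y h =>
    hv0 x y (by unfold InGrid; omega)
  simp only [laplacian, foldExt]
  rcases fold_neighbors (M := m + 1) (by omega) i with ⟨hx, hi⟩ | ⟨hi0, hi1, hx⟩
  · rw [hx, hbdry (fold (m + 1) i) (fold (n + 1) (j - 1)) (by omega),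
      hbdry (fold (m + 1) i) (fold (n + 1) (j + 1)) (by omega)]
    grind
  rcases fold_neighbors (M := n + 1) (by omega) j with ⟨hy, hj⟩ | ⟨hj0, hj1, hy⟩
  · rw [hy, hbdry (fold (m + 1) (i - 1)) _ (by omega), hbdry (fold (m + 1) (i + 1)) _ (by omega)]
    grind
  have h := hv1 _ _ (show InGrid m n (fold (m + 1) i) (fold (n + 1) j) by unfold InGrid; omega)
  rcases hx with ⟨hx1, hx2⟩ | ⟨hx1, hx2⟩ <;> rcases hy with ⟨hy1, hy2⟩ | ⟨hy1, hy2⟩ <;>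
    rw [hx1, hx2, hy1, hy2] <;> linear_combination h

theorem foldExt_add_sub (hm : 0 ≤ m) (hn : 0 ≤ n) (hv : IsHarmonic m n v) (a b : ℤ) :
    foldExt m n v (a + b) (a - b) = foldExt m n v a a + foldExt m n v (-1 - b) (-1 - b) := by
  have hsep := eq_add_sub_of_plaquette (f := fun a b => foldExt m n v (a + b) (a - b))
    (fun p q => by
      have h := laplacian_foldExt hm hn hv (p + q + 1) (p - q)
      simp only [laplacian] at h
      ring_nf at h ⊢
      grind)
  have h1 := hsep a b
  have h2 := hsep (-1 - b) b
  have hmirror : foldExt m n v (-1 - b + b) (-1 - b - b) = 0 :=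
    foldExt_eq_zero hm hn hv.1 (Or.inl ⟨0, by ring⟩)
  simp only [add_zero, sub_zero] at h1 h2
  grind

theorem foldExt_diag_mem_symmPeriodic (hm : 0 ≤ m) (hn : 0 ≤ n) (hv : IsHarmonic m n v) :
    (fun t => foldExt m n v t t) ∈ symmPeriodic (Int.gcd (m + 1) (n + 1)) := by
  have hsep := foldExt_add_sub hm hn hv
  have hzero : ∀ {i j}, m + 1 ∣ i + 1 ∨ n + 1 ∣ j + 1 → foldExt m n v i j = 0 :=
    foldExt_eq_zero hm hn hv.1
  -- each identity is `hsep` at a point `(a + b, a - b)` on one of the mirrors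
  have hsymm (t : ℤ) : foldExt m n v (-2 - t) (-2 - t) = foldExt m n v t t := by
    have h := hsep t (t + 1)
    rw [hzero (Or.inr ⟨0, by ring⟩), show -1 - (t + 1) = -2 - t by ring] at h
    exact (CharTwo.add_eq_zero.mp h.symm).symm
  have hM : Periodic (fun t => foldExt m n v t t) (m + 1) := fun t => by
    have h := hsep (t + (m + 1)) (-1 - t)
    rw [hzero (Or.inl ⟨1, by ring⟩), show -1 - (-1 - t) = t by ring] at h
    exact CharTwo.add_eq_zero.mp h.symm
  have hN : Periodic (fun t => foldExt m n v t t) (n + 1) := fun t => by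
    have h := hsep (t + (n + 1)) (t + 1)
    rw [hzero (Or.inr ⟨1, by ring⟩), show -1 - (t + 1) = -2 - t by ring, hsymm] at h
    exact CharTwo.add_eq_zero.mp h.symm
  exact ⟨hM.gcd_period hN, hsymm, hzero (Or.inl ⟨0, by ring⟩)⟩

end FoldExt

def liftDiag (φ : ℤ → ZMod 2) (i j : ℤ) : ZMod 2 :=
  if Even (i + j) then φ ((i + j) / 2) + φ (-1 - (i - j) / 2) else 0

def restrictGrid (m n : ℤ) (w : ℤ → ℤ → ZMod 2) (i j : ℤ) : ZMod 2 :=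
  if InGrid m n i j then w i j else 0

section LiftDiag

variable {φ : ℤ → ZMod 2}

theorem laplacian_liftDiag (φ : ℤ → ZMod 2) (i j : ℤ) : laplacian (liftDiag φ) i j = 0 := by
  simp only [laplacian, liftDiag, Int.even_iff]
  by_cases h : (i + j) % 2 = 0
  · rw [if_neg (by omega), if_neg (by omega), if_neg (by omega), if_neg (by omega)]
    simp
  · obtain ⟨p, hp⟩ : ∃ p, i + j = 2 * p + 1 := ⟨(i + j) / 2, by omega⟩
    obtain ⟨q, hq⟩ : ∃ q, i - j = 2 * q + 1 := ⟨(i - j) / 2, by omega⟩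
    rw [if_pos (by omega), if_pos (by omega), if_pos (by omega), if_pos (by omega),
      show (i - 1 + j) / 2 = p by omega, show (i - 1 - j) / 2 = q by omega,
      show (i + 1 + j) / 2 = p + 1 by omega, show (i + 1 - j) / 2 = q + 1 by omega,
      show (i + (j - 1)) / 2 = p by omega, show (i - (j - 1)) / 2 = q + 1 by omega,
      show (i + (j + 1)) / 2 = p + 1 by omega, show (i - (j + 1)) / 2 = q by omega]
    grind

theorem liftDiag_fold {M N : ℤ} (hM : Periodic φ M) (hN : Periodic φ N)
    (hsymm : ∀ t, φ (-2 - t) = φ t) (i j : ℤ) :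
    liftDiag φ (fold M i) (fold N j) = liftDiag φ i j := by
  have hperM (y : ℤ) : Periodic (fun x => liftDiag φ x y) (2 * M) := fun x => by
    simp only [liftDiag, Int.even_iff]
    rw [show (x + 2 * M + y) % 2 = (x + y) % 2 by omega,
      show (x + 2 * M + y) / 2 = (x + y) / 2 + M by omega,
      show -1 - (x + 2 * M - y) / 2 = -1 - (x - y) / 2 - M by omega, hM, hM.sub_eq]
  have hperN (x : ℤ) : Periodic (fun y => liftDiag φ x y) (2 * N) := fun y => by
    simp only [liftDiag, Int.even_iff]
    rw [show (x + (y + 2 * N)) % 2 = (x + y) % 2 by omega,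
      show (x + (y + 2 * N)) / 2 = (x + y) / 2 + N by omega,
      show -1 - (x - (y + 2 * N)) / 2 = -1 - (x - y) / 2 + N by omega, hN, hN]
  have hreflM (x y : ℤ) : liftDiag φ (-2 - x) y = liftDiag φ x y := by
    simp only [liftDiag, Int.even_iff]
    rw [show (-2 - x + y) % 2 = (x + y) % 2 by omega]
    split_ifs
    · rw [show (-2 - x + y) / 2 = -1 - (x - y) / 2 by omega,
        show -1 - (-2 - x - y) / 2 = (x + y) / 2 by omega, add_comm]
    · rfl
  have hreflN (x y : ℤ) : liftDiag φ x (-2 - y) = liftDiag φ x y := by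
    simp only [liftDiag, Int.even_iff]
    rw [show (x + (-2 - y)) % 2 = (x + y) % 2 by omega]
    split_ifs
    · rw [show (x + (-2 - y)) / 2 = -2 - (-1 - (x - y) / 2) by omega,
        show -1 - (x - (-2 - y)) / 2 = -2 - (x + y) / 2 by omega, hsymm, hsymm, add_comm]
    · rfl
  rw [apply_fold (g := fun x => liftDiag φ x (fold N j)) (hperM _) (hreflM · _),
    apply_fold (g := liftDiag φ i) (hperN i) (hreflN i)]

theorem liftDiag_eq_zero_of_boundary {M N : ℤ} (hM : Periodic φ M) (hN : Periodic φ N)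
    (hsymm : ∀ t, φ (-2 - t) = φ t) {i j : ℤ} (h : i = -1 ∨ i = M - 1 ∨ j = -1 ∨ j = N - 1) :
    liftDiag φ i j = 0 := by
  simp only [liftDiag, Int.even_iff]
  split_ifs with hev
  · rcases h with rfl | rfl | rfl | rfl
    · rw [show -1 - (-1 - j) / 2 = (-1 + j) / 2 by omega]
      exact CharTwo.add_self_eq_zero _
    · rw [show (M - 1 + j) / 2 = -1 - (M - 1 - j) / 2 + M by omega, hM]
      exact CharTwo.add_self_eq_zero _
    · rw [show -1 - (i - -1) / 2 = -2 - (i + -1) / 2 by omega, hsymm]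
      exact CharTwo.add_self_eq_zero _
    · rw [show -1 - (i - (N - 1)) / 2 = -2 - (i + (N - 1)) / 2 + N by omega, hN, hsymm]
      exact CharTwo.add_self_eq_zero _
  · rfl

end LiftDiag

section Equiv

variable {m n : ℤ} {φ : ℤ → ZMod 2} {v : ℤ → ℤ → ZMod 2}

theorem restrictGrid_liftDiag (hM : Periodic φ (m + 1)) (hN : Periodic φ (n + 1))
    (hsymm : ∀ t, φ (-2 - t) = φ t) {i j : ℤ} (hi : i ∈ Set.Icc (-1) m) (hj : j ∈ Set.Icc (-1) n) :
    restrictGrid m n (liftDiag φ) i j = liftDiag φ i j := by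
  obtain ⟨hi0, hi1⟩ := hi
  obtain ⟨hj0, hj1⟩ := hj
  unfold restrictGrid
  split_ifs with hg
  · rfl
  · refine (liftDiag_eq_zero_of_boundary hM hN hsymm ?_).symm
    unfold InGrid at hg
    omega

theorem restrictGrid_liftDiag_mem_kerBW (hM : Periodic φ (m + 1)) (hN : Periodic φ (n + 1))
    (hsymm : ∀ t, φ (-2 - t) = φ t) : restrictGrid m n (liftDiag φ) ∈ kerBW m n := by
  refine ⟨⟨fun i j hg => if_neg hg, fun i j hg => ?_⟩, fun i j hodd => ?_⟩
  · obtain ⟨hi0, hi1, hj0, hj1⟩ := hg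
    rw [restrictGrid_liftDiag hM hN hsymm ⟨by omega, by omega⟩ ⟨by omega, by omega⟩,
      restrictGrid_liftDiag hM hN hsymm ⟨by omega, by omega⟩ ⟨by omega, by omega⟩,
      restrictGrid_liftDiag hM hN hsymm ⟨by omega, by omega⟩ ⟨by omega, by omega⟩,
      restrictGrid_liftDiag hM hN hsymm ⟨by omega, by omega⟩ ⟨by omega, by omega⟩]
    exact laplacian_liftDiag φ i j
  · simp [restrictGrid, liftDiag, Int.not_even_iff_odd.mpr hodd]

theorem foldExt_restrictGrid_liftDiag (hm : 0 ≤ m) (hn : 0 ≤ n)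
    (hφ : φ ∈ symmPeriodic (Int.gcd (m + 1) (n + 1))) (t : ℤ) :
    foldExt m n (restrictGrid m n (liftDiag φ)) t t = φ t := by
  obtain ⟨hφg, hsymm, hφ0⟩ := hφ
  have hM := hφg.of_dvd (Int.gcd_dvd_left _ _)
  have hN := hφg.of_dvd (Int.gcd_dvd_right _ _)
  obtain ⟨hi0, hi1⟩ := fold_mem_Icc (show 0 < m + 1 by omega) t
  obtain ⟨hj0, hj1⟩ := fold_mem_Icc (show 0 < n + 1 by omega) t
  rw [foldExt, restrictGrid_liftDiag hM hN hsymm ⟨hi0, by omega⟩ ⟨hj0, by omega⟩,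
    liftDiag_fold hM hN hsymm, liftDiag, if_pos ⟨t, rfl⟩, show (t + t) / 2 = t by omega, sub_self,
    Int.zero_ediv, sub_zero, hφ0, add_zero]

theorem restrictGrid_liftDiag_foldExt (hm : 0 ≤ m) (hn : 0 ≤ n) (hv : v ∈ kerBW m n) :
    restrictGrid m n (liftDiag fun t => foldExt m n v t t) = v := by
  obtain ⟨hharm, hwhite⟩ := hv
  funext i j
  unfold restrictGrid liftDiag
  split_ifs with hg hev
  · obtain ⟨hi0, hi1, hj0, hj1⟩ := hg
    rw [Int.even_iff] at hev
    rw [← foldExt_add_sub hm hn hharm, show (i + j) / 2 + (i - j) / 2 = i by omega,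
      show (i + j) / 2 - (i - j) / 2 = j by omega, foldExt,
      fold_of_mem_Icc (by omega) ⟨by omega, by omega⟩,
      fold_of_mem_Icc (by omega) ⟨by omega, by omega⟩]
  · exact (hwhite i j (Int.not_even_iff_odd.mp hev)).symm
  · exact (hharm.1 i j hg).symm

def kerBWEquivSymmPeriodic (hm : 0 ≤ m) (hn : 0 ≤ n) :
    kerBW m n ≃ₗ[ZMod 2] symmPeriodic (Int.gcd (m + 1) (n + 1)) where
  toFun v := ⟨fun t => foldExt m n v t t, foldExt_diag_mem_symmPeriodic hm hn v.2.1⟩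
  map_add' _ _ := rfl
  map_smul' _ _ := rfl
  invFun φ := ⟨restrictGrid m n (liftDiag φ), restrictGrid_liftDiag_mem_kerBW
    (φ.2.1.of_dvd (Int.gcd_dvd_left _ _)) (φ.2.1.of_dvd (Int.gcd_dvd_right _ _)) φ.2.2.1⟩
  left_inv v := Subtype.ext (restrictGrid_liftDiag_foldExt hm hn v.2)
  right_inv φ := Subtype.ext (funext (foldExt_restrictGrid_liftDiag hm hn φ.2))

end Equiv

theorem kerBW_dim_eq_square_general (m n : ℤ) (hm : 2 ≤ m) (hn : 2 ≤ n)
    (c : ℕ) (hc : c = Int.gcd (m + 1) (n + 1) - 1) :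
    Module.finrank (ZMod 2) (kerBW m n) =
      Module.finrank (ZMod 2) (kerBW (c : ℤ) (c : ℤ)) := by
  have hgcd : Int.gcd (c + 1) (c + 1) = Int.gcd (m + 1) (n + 1) := by
    have := Int.gcd_pos_of_ne_zero_left (n + 1) (show m + 1 ≠ 0 by omega)
    rw [Int.gcd_self]
    omega
  rw [(kerBWEquivSymmPeriodic (by omega) (by omega)).finrank_eq,
    (kerBWEquivSymmPeriodic (by omega) (by omega)).finrank_eq, hgcd]

/-- Theorem 3(iv) for ker BW: dim ker BW of the m×n grid equals
dim ker BW of the c×c grid. -/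
theorem kerBW_dim_eq_square (m n : ℤ) (hm : 2 ≤ m) (hn : 2 ≤ n)
    (c : ℕ) (hc : c = Int.gcd (m + 1) (n + 1) - 1) (hc1 : 1 ≤ c) :
    Module.finrank (ZMod 2) (kerBW m n) =
      Module.finrank (ZMod 2) (kerBW (c : ℤ) (c : ℤ)) :=
  kerBW_dim_eq_square_general m n hm hn c hc
end

section
/- (Proposition 4, black part.) Let c ≥ 1 be an integer. The 𝔽₂-dimension of the polarized kernel ker BW of the c×c square grid satisfies 2·dim ker BW_{c,c} = c + (c mod 2). -/
/-!
Reading off the values at the black points `(2t, 0)` of the bottom row is an isomorphism from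
ker BW onto `𝔽₂^⌈c/2⌉`. It is injective because harmonicity at row `j` determines row `j + 1`
from rows `j` and `j - 1`, and the white points of row `0` vanish anyway.

For surjectivity, pass to the diagonal coordinates `(i + j)/2` and `(i - j - 2)/2` of the black
points: there the four neighbours of a white point form a unit square, so every
`v(i, j) = g((i + j)/2) + g((i - j - 2)/2)` satisfies the harmonic condition at white points.
Vanishing on the frame around the grid amounts to the invariance of `g` under the reflections
`x ↦ -2 - x` and `x ↦ c - 1 - x`, and the indicator of the band `[t, c - 1 - t]`, symmetrized
under the first reflection, yields the `t`-th basis vector.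
-/

section Harmonic

variable {m n : ℤ} {v : ℤ → ℤ → ZMod 2}

theorem harm_eq_zero_of_row_zero (hv : v ∈ harm m n) (hrow : ∀ i, v i 0 = 0) : v = 0 := by
  obtain ⟨hout, hsum⟩ := hv
  have rows : ∀ k : ℕ, ∀ i, v i k = 0 ∧ v i (k - 1) = 0 := by
    intro k
    induction k with
    | zero => exact fun i => ⟨hrow i, hout i _ (by unfold InGrid; omega)⟩
    | succ k ih =>
      intro i
      refine ⟨?_, by simpa using (ih i).1⟩
      by_cases hk : InGrid m n i k
      · have h := hsum i k hk
        rw [(ih (i - 1)).1, (ih (i + 1)).1, (ih i).2] at h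
        simpa using h
      · exact hout i _ (by unfold InGrid at hk ⊢; push_cast; omega)
  funext i j
  obtain ⟨k, rfl | rfl⟩ := Int.eq_nat_or_neg j
  · exact (rows k i).1
  · rcases k with _ | k
    · exact hrow i
    · exact hout i _ (by unfold InGrid; omega)

theorem kerBW_eq_zero_of_even_row_zero (hv : v ∈ kerBW m n)
    (hrow : ∀ t, 0 ≤ t → 2 * t ≤ m - 1 → v (2 * t) 0 = 0) : v = 0 := by
  obtain ⟨hharm, hwhite⟩ := Submodule.mem_inf.mp hv
  refine harm_eq_zero_of_row_zero hharm fun i => ?_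
  rcases Int.even_or_odd' i with ⟨t, rfl | rfl⟩
  · by_cases ht : 0 ≤ t ∧ 2 * t ≤ m - 1
    · exact hrow t ht.1 ht.2
    · exact hharm.1 _ _ (by unfold InGrid; omega)
  · exact hwhite _ _ (by simp)

end Harmonic

section Lift

def diagLift (g : ℤ → ZMod 2) (i j : ℤ) : ZMod 2 :=
  g ((i + j) / 2) + g ((i - j - 2) / 2)

theorem diagLift_neighbour_sum (g : ℤ → ZMod 2) (i j : ℤ) :
    diagLift g (i - 1) j + diagLift g (i + 1) j + diagLift g i (j - 1) + diagLift g i (j + 1)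
      = 0 := by
  unfold diagLift
  rw [show i - 1 + j = i + (j - 1) by ring, show i - 1 - j - 2 = i - (j + 1) - 2 by ring,
    show i + 1 + j = i + (j + 1) by ring, show i + 1 - j - 2 = i - (j - 1) - 2 by ring]
  ring_nf
  reduce_mod_char

variable {c : ℤ} {g : ℤ → ZMod 2}

theorem diagLift_eq_zero_of_frame (hleft : ∀ x, g (-2 - x) = g x)
    (hright : ∀ x, 0 ≤ x → x ≤ c - 1 → g (c - 1 - x) = g x) {i j : ℤ} (heven : Even (i + j))
    (hframe : (0 ≤ i ∧ i ≤ c - 1 ∧ (j = -1 ∨ j = c)) ∨ (0 ≤ j ∧ j ≤ c - 1 ∧ (i = -1 ∨ i = c))) :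
    diagLift g i j = 0 := by
  obtain ⟨k, hk⟩ := heven
  unfold diagLift
  rcases hframe with ⟨hi0, hi1, hj | hj⟩ | ⟨hj0, hj1, hi | hi⟩
  · rw [hj, show (i - -1 - 2) / 2 = (i + -1) / 2 by omega]
    exact CharTwo.add_self_eq_zero _
  · rw [hj, show (i + c) / 2 = k by omega, show (i - c - 2) / 2 = -2 - (c - 1 - k) by omega,
      hleft, hright k (by omega) (by omega)]
    exact CharTwo.add_self_eq_zero _
  · rw [hi, show (-1 + j) / 2 = k by omega, show (-1 - j - 2) / 2 = -2 - k by omega,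
      hleft]
    exact CharTwo.add_self_eq_zero _
  · rw [hi, show (c + j) / 2 = k by omega, show (c - j - 2) / 2 = c - 1 - k by omega,
      hright k (by omega) (by omega)]
    exact CharTwo.add_self_eq_zero _

def blackLift (c : ℤ) (g : ℤ → ZMod 2) (i j : ℤ) : ZMod 2 :=
  if InGrid c c i j ∧ Even (i + j) then diagLift g i j else 0

theorem blackLift_eq_diagLift_of_adj (hleft : ∀ x, g (-2 - x) = g x)
    (hright : ∀ x, 0 ≤ x → x ≤ c - 1 → g (c - 1 - x) = g x) {i j a b : ℤ}
    (hij : InGrid c c i j)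
    (hadj : (a = i - 1 ∨ a = i + 1) ∧ b = j ∨ a = i ∧ (b = j - 1 ∨ b = j + 1))
    (heven : Even (a + b)) : blackLift c g a b = diagLift g a b := by
  by_cases hab : InGrid c c a b
  · exact if_pos ⟨hab, heven⟩
  · rw [blackLift, if_neg (fun h => hab h.1),
      diagLift_eq_zero_of_frame hleft hright heven (by unfold InGrid at hij hab; omega)]

theorem blackLift_mem_kerBW (hleft : ∀ x, g (-2 - x) = g x)
    (hright : ∀ x, 0 ≤ x → x ≤ c - 1 → g (c - 1 - x) = g x) : blackLift c g ∈ kerBW c c := by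
  have white : ∀ i j, Odd (i + j) → blackLift c g i j = 0 := fun i j hodd =>
    if_neg fun h => Int.not_odd_iff_even.mpr h.2 hodd
  refine Submodule.mem_inf.mpr ⟨⟨fun i j h => if_neg fun h' => h h'.1, fun i j hij => ?_⟩, white⟩
  rcases Int.even_or_odd' (i + j) with ⟨k, hk | hk⟩
  · rw [white _ _ ⟨k - 1, by omega⟩, white _ _ ⟨k, by omega⟩, white _ _ ⟨k - 1, by omega⟩,
      white _ _ ⟨k, by omega⟩]
    simp
  · have adj a b := blackLift_eq_diagLift_of_adj (a := a) (b := b) hleft hright hij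
    rw [adj (i - 1) j (by omega) ⟨k, by omega⟩, adj (i + 1) j (by omega) ⟨k + 1, by omega⟩,
      adj i (j - 1) (by omega) ⟨k, by omega⟩, adj i (j + 1) (by omega) ⟨k + 1, by omega⟩]
    exact diagLift_neighbour_sum g i j

theorem blackLift_even_row_zero {t : ℤ} (ht0 : 0 ≤ t) (ht : 2 * t ≤ c - 1) :
    blackLift c g (2 * t) 0 = g t + g (t - 1) := by
  rw [blackLift, if_pos ⟨by unfold InGrid; omega, ⟨t, by ring⟩⟩, diagLift,
    show (2 * t + 0) / 2 = t by omega, show (2 * t - 0 - 2) / 2 = t - 1 by omega]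

end Lift

section Band

variable {c t : ℤ}

def bandProfile (c t x : ℤ) : ZMod 2 :=
  if (t ≤ x ∧ x ≤ c - 1 - t) ∨ (t ≤ -2 - x ∧ -2 - x ≤ c - 1 - t) then 1 else 0

theorem bandProfile_reflect_neg_one (x : ℤ) : bandProfile c t (-2 - x) = bandProfile c t x := by
  simp only [bandProfile, sub_sub_cancel, or_comm]

theorem bandProfile_reflect {x : ℤ} (hx0 : 0 ≤ x) (hx : x ≤ c - 1) :
    bandProfile c t (c - 1 - x) = bandProfile c t x := by
  unfold bandProfile
  congr 1
  exact propext (by omega)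

theorem bandProfile_add_pred {s : ℤ} (hs0 : 0 ≤ s) (hs : 2 * s ≤ c - 1) (ht0 : 0 ≤ t)
    (ht : 2 * t ≤ c - 1) :
    bandProfile c t s + bandProfile c t (s - 1) = if s = t then 1 else 0 := by
  unfold bandProfile
  split_ifs <;> first | omega | decide

end Band

def evenRowRestrict (m : ℕ) (n : ℤ) : kerBW m n →ₗ[ZMod 2] (Fin ((m + 1) / 2) → ZMod 2) where
  toFun v t := (v : ℤ → ℤ → ZMod 2) (2 * t) 0
  map_add' _ _ := rfl
  map_smul' _ _ := rfl

theorem evenRowRestrict_injective {m : ℕ} {n : ℤ} : Function.Injective (evenRowRestrict m n) := by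
  refine (injective_iff_map_eq_zero _).mpr fun v hv => Subtype.ext ?_
  refine kerBW_eq_zero_of_even_row_zero v.2 fun t ht0 ht => ?_
  simpa [evenRowRestrict, ht0] using congrFun hv ⟨t.toNat, by omega⟩

theorem evenRowRestrict_surjective (c : ℕ) : Function.Surjective (evenRowRestrict c c) := by
  rw [← LinearMap.range_eq_top, eq_top_iff, ← (Pi.basisFun (ZMod 2) _).span_eq, Submodule.span_le]
  rintro _ ⟨t, rfl⟩
  have ht : 2 * (t : ℤ) ≤ c - 1 := by omega
  refine ⟨⟨blackLift c (bandProfile c t), blackLift_mem_kerBW bandProfile_reflect_neg_one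
    fun x => bandProfile_reflect⟩, funext fun s => ?_⟩
  have hs : 2 * (s : ℤ) ≤ c - 1 := by omega
  simp only [evenRowRestrict, LinearMap.coe_mk, AddHom.coe_mk, Pi.basisFun_apply]
  rw [blackLift_even_row_zero (by positivity) hs, bandProfile_add_pred (by positivity) hs
    (by positivity) ht, Pi.single_apply]
  simp only [Nat.cast_inj, Fin.val_inj]

theorem kerBW_square_dim_general (c : ℕ) :
    2 * Module.finrank (ZMod 2) (kerBW (c : ℤ) (c : ℤ)) = c + c % 2 := by
  rw [(LinearEquiv.ofBijective _
    ⟨evenRowRestrict_injective, evenRowRestrict_surjective c⟩).finrank_eq, Module.finrank_fin_fun]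
  omega

/-- Proposition 4, black part: 2·dim ker BW of the c×c grid
equals c + (c mod 2). -/
theorem kerBW_square_dim (c : ℕ) (hc : 1 ≤ c) :
    2 * Module.finrank (ZMod 2) (kerBW (c : ℤ) (c : ℤ)) = c + c % 2 :=
  kerBW_square_dim_general c
end
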